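/- arXiv:1906.05793 — 4 statements merged into one kernel-verified Lean document; each statement's English description precedes it below -/
import Mathlib

section
/- Let C be an n×n real matrix with all entries strictly positive and all row sums equal to 1 (a positive row-stochastic matrix). Then there exists a unique probability vector π (entries nonnegative, summing to 1) with Cᵀπ = π, π has all entries strictly positive, and for every v ∈ ℝⁿ the iterates (Cᵀ)^k v converge as k → ∞ to (∑ᵢ vᵢ) · π. -/
open Filter Topology Matrix

section Aux

variable {n : ℕ} (C : Matrix (Fin n) (Fin n) ℝ)

lemma aux_sum_mulVec (hstoch : ∀ i, ∑ j, C i j = 1) (x : Fin n → ℝ) :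
    ∑ i, (Cᵀ *ᵥ x) i = ∑ i, x i := by
  simp only [Matrix.mulVec, dotProduct, Matrix.transpose_apply]
  rw [Finset.sum_comm]
  refine Finset.sum_congr rfl fun j _ => ?_
  rw [← Finset.sum_mul, hstoch j, one_mul]

lemma aux_contract (δ : ℝ) (hδ : ∀ i j, δ ≤ C i j)
    (hstoch : ∀ i, ∑ j, C i j = 1)
    (x : Fin n → ℝ) (hx : ∑ i, x i = 0) :
    ∑ i, |(Cᵀ *ᵥ x) i| ≤ (1 - n * δ) * ∑ i, |x i| := by
  have h1 : ∀ i, (Cᵀ *ᵥ x) i = ∑ j, (C j i - δ) * x j := by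
    intro i
    simp only [Matrix.mulVec, dotProduct, Matrix.transpose_apply, sub_mul,
      Finset.sum_sub_distrib, ← Finset.mul_sum, hx, mul_zero, sub_zero]
  calc ∑ i, |(Cᵀ *ᵥ x) i| ≤ ∑ i, ∑ j, (C j i - δ) * |x j| := by
        refine Finset.sum_le_sum fun i _ => ?_
        rw [h1]
        refine (Finset.abs_sum_le_sum_abs _ _).trans ?_
        refine Finset.sum_le_sum fun j _ => ?_
        rw [abs_mul, abs_of_nonneg (by linarith [hδ j i])]
    _ = ∑ j, (1 - n * δ) * |x j| := by
        rw [Finset.sum_comm]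
        refine Finset.sum_congr rfl fun j _ => ?_
        rw [← Finset.sum_mul, Finset.sum_sub_distrib, hstoch j, Finset.sum_const,
          Finset.card_univ, Fintype.card_fin, nsmul_eq_mul]
    _ = (1 - n * δ) * ∑ j, |x j| := by rw [Finset.mul_sum]

lemma aux_iter (δ : ℝ) (hδ : ∀ i j, δ ≤ C i j) (hδ1 : (n : ℝ) * δ ≤ 1)
    (hstoch : ∀ i, ∑ j, C i j = 1)
    (x : Fin n → ℝ) (hx : ∑ i, x i = 0) (k : ℕ) :
    (∑ i, ((Cᵀ ^ k) *ᵥ x) i = 0) ∧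
    ∑ i, |((Cᵀ ^ k) *ᵥ x) i| ≤ (1 - n * δ) ^ k * ∑ i, |x i| := by
  induction k with
  | zero =>
    constructor
    · simpa using hx
    · simp
  | succ k ih =>
    have hpow : (Cᵀ ^ (k + 1)) *ᵥ x = Cᵀ *ᵥ ((Cᵀ ^ k) *ᵥ x) := by
      rw [pow_succ', Matrix.mulVec_mulVec]
    constructor
    · rw [hpow, aux_sum_mulVec C hstoch, ih.1]
    · rw [hpow]
      calc ∑ i, |(Cᵀ *ᵥ ((Cᵀ ^ k) *ᵥ x)) i| ≤
          (1 - n * δ) * ∑ i, |((Cᵀ ^ k) *ᵥ x) i| :=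
            aux_contract C δ hδ hstoch _ ih.1
        _ ≤ (1 - n * δ) * ((1 - n * δ) ^ k * ∑ i, |x i|) := by
            refine mul_le_mul_of_nonneg_left ih.2 (by linarith)
        _ = (1 - n * δ) ^ (k + 1) * ∑ i, |x i| := by ring

lemma aux_tendsto_mulVec {x : ℕ → Fin n → ℝ} {L : Fin n → ℝ}
    (h : Tendsto x atTop (𝓝 L)) :
    Tendsto (fun k => Cᵀ *ᵥ x k) atTop (𝓝 (Cᵀ *ᵥ L)) := by
  rw [tendsto_pi_nhds]
  intro i
  simp only [Matrix.mulVec, dotProduct]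
  exact tendsto_finset_sum _ fun j _ => ((tendsto_pi_nhds.1 h j).const_mul _)

end Aux

/-- **Power Method / Eigentrust convergence for positive row-stochastic matrices.**
If `C` is an `n × n` real matrix with all entries strictly positive and all row sums equal
to `1`, then there is a unique probability vector `pr` with `Cᵀ *ᵥ pr = pr`; it is strictly
positive, and for every `v : ℝⁿ` the iterates `(Cᵀ)ᵏ *ᵥ v` converge to `(∑ i, v i) • pr`. -/
theorem stmt_1 {n : ℕ} (hn : 0 < n) (C : Matrix (Fin n) (Fin n) ℝ)
    (hpos : ∀ i j, 0 < C i j) (hstoch : ∀ i, ∑ j, C i j = 1) :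
    ∃ pr : Fin n → ℝ,
      ((∀ i, 0 ≤ pr i) ∧ ∑ i, pr i = 1 ∧ Cᵀ *ᵥ pr = pr) ∧
      (∀ pr' : Fin n → ℝ,
        ((∀ i, 0 ≤ pr' i) ∧ ∑ i, pr' i = 1 ∧ Cᵀ *ᵥ pr' = pr') → pr' = pr) ∧
      (∀ i, 0 < pr i) ∧
      ∀ v : Fin n → ℝ,
        Tendsto (fun k : ℕ => (Cᵀ ^ k) *ᵥ v) atTop (𝓝 ((∑ i, v i) • pr)) := by
  -- the minimal entry δ
  have hne : (Finset.univ : Finset (Fin n × Fin n)).Nonempty := by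
    refine ⟨(⟨0, hn⟩, ⟨0, hn⟩), Finset.mem_univ _⟩
  obtain ⟨p, -, hp⟩ := Finset.exists_min_image Finset.univ
    (fun q : Fin n × Fin n => C q.1 q.2) hne
  set δ : ℝ := C p.1 p.2 with hδdef
  have hδpos : 0 < δ := hpos p.1 p.2
  have hδle : ∀ i j, δ ≤ C i j := fun i j => hp (i, j) (Finset.mem_univ _)
  set τ : ℝ := 1 - n * δ with hτdef
  have hnδ : (n : ℝ) * δ ≤ 1 := by
    have := Finset.sum_le_sum (fun j _ => hδle ⟨0, hn⟩ j :
      ∀ j ∈ Finset.univ, δ ≤ C ⟨0, hn⟩ j)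
    rw [hstoch ⟨0, hn⟩, Finset.sum_const, Finset.card_univ, Fintype.card_fin,
      nsmul_eq_mul] at this
    linarith
  have hτ0 : 0 ≤ τ := by simp only [hτdef]; linarith
  have hτ1 : τ < 1 := by
    have : 0 < (n : ℝ) * δ := by positivity
    simp only [hτdef]; linarith
  -- the iteration starting at the uniform vector
  set u : Fin n → ℝ := fun _ => (n : ℝ)⁻¹ with hudef
  have hnne : (n : ℝ) ≠ 0 := Nat.cast_ne_zero.2 hn.ne'
  have hsumu : ∑ i, u i = 1 := by
    simp [hudef, Finset.sum_const, Finset.card_univ, mul_inv_cancel₀ hnne]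
  set x : ℕ → Fin n → ℝ := fun k => (Cᵀ ^ k) *ᵥ u with hxdef
  have hxsucc : ∀ k, x (k + 1) = Cᵀ *ᵥ x k := by
    intro k; simp only [hxdef]; rw [pow_succ', Matrix.mulVec_mulVec]
  -- ℓ¹ bound on increments
  set B : ℝ := ∑ i, |(Cᵀ *ᵥ u - u) i| with hBdef
  have hdiffsum : ∑ i, (Cᵀ *ᵥ u - u) i = 0 := by
    simp only [Pi.sub_apply, Finset.sum_sub_distrib]
    rw [aux_sum_mulVec C hstoch, sub_self]
  have hincr : ∀ k, x (k + 1) - x k = (Cᵀ ^ k) *ᵥ (Cᵀ *ᵥ u - u) := by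
    intro k
    rw [Matrix.mulVec_sub]
    simp only [hxdef, Matrix.mulVec_mulVec, ← pow_succ', ← pow_succ]
  have hl1 : ∀ (y : Fin n → ℝ), ‖y‖ ≤ ∑ i, |y i| := by
    intro y
    refine (pi_norm_le_iff_of_nonneg (Finset.sum_nonneg fun i _ => abs_nonneg _)).2
      fun i => ?_
    exact Finset.single_le_sum (f := fun i => |y i|) (fun j _ => abs_nonneg _)
      (Finset.mem_univ i)
  have hcauchy : CauchySeq x := by
    refine cauchySeq_of_le_geometric τ B hτ1 fun k => ?_
    rw [dist_eq_norm, ← neg_sub, norm_neg]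
    refine (hl1 _).trans ?_
    rw [hincr k]
    have := (aux_iter C δ hδle hnδ hstoch _ hdiffsum k).2
    calc ∑ i, |((Cᵀ ^ k) *ᵥ (Cᵀ *ᵥ u - u)) i| ≤ τ ^ k * B := this
      _ = B * τ ^ k := mul_comm _ _
  obtain ⟨pr, hlim⟩ := cauchySeq_tendsto_of_complete hcauchy
  -- basic facts about the iterates
  have hxsum : ∀ k, ∑ i, x k i = 1 := by
    intro k
    induction k with
    | zero => simpa [hxdef] using hsumu
    | succ k ih => rw [hxsucc k, aux_sum_mulVec C hstoch]; exact ih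
  have hxnonneg : ∀ k i, 0 ≤ x k i := by
    intro k
    induction k with
    | zero =>
      intro i
      simp only [hxdef, pow_zero, Matrix.one_mulVec, hudef]
      positivity
    | succ k ih =>
      intro i
      rw [hxsucc k]
      simp only [Matrix.mulVec, dotProduct, Matrix.transpose_apply]
      exact Finset.sum_nonneg fun j _ => mul_nonneg (hpos j i).le (ih j)
  -- properties of pr
  have hcoord : ∀ i, Tendsto (fun k => x k i) atTop (𝓝 (pr i)) :=
    fun i => tendsto_pi_nhds.1 hlim i
  have hprnonneg : ∀ i, 0 ≤ pr i := by
    intro i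
    exact ge_of_tendsto (hcoord i) (Eventually.of_forall fun k => hxnonneg k i)
  have hprsum : ∑ i, pr i = 1 := by
    have h1 : Tendsto (fun k => ∑ i, x k i) atTop (𝓝 (∑ i, pr i)) :=
      tendsto_finset_sum _ fun i _ => hcoord i
    have h2 : Tendsto (fun k => ∑ i, x k i) atTop (𝓝 1) := by
      simp only [hxsum]; exact tendsto_const_nhds
    exact tendsto_nhds_unique h1 h2
  have hfix : Cᵀ *ᵥ pr = pr := by
    have h1 : Tendsto (fun k => x (k + 1)) atTop (𝓝 (Cᵀ *ᵥ pr)) := by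
      have := aux_tendsto_mulVec C hlim
      refine this.congr fun k => (hxsucc k).symm
    have h2 : Tendsto (fun k => x (k + 1)) atTop (𝓝 pr) :=
      hlim.comp (tendsto_add_atTop_nat 1)
    exact tendsto_nhds_unique h1 h2
  -- strict positivity
  have hprpos : ∀ i, 0 < pr i := by
    intro i
    have : pr i = ∑ j, C j i * pr j := by
      conv_lhs => rw [← hfix]
      simp [Matrix.mulVec, dotProduct, Matrix.transpose_apply]
    rw [this]
    calc (0 : ℝ) < δ := hδpos
      _ = δ * ∑ j, pr j := by rw [hprsum, mul_one]
      _ = ∑ j, δ * pr j := Finset.mul_sum _ _ _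
      _ ≤ ∑ j, C j i * pr j := Finset.sum_le_sum fun j _ =>
          mul_le_mul_of_nonneg_right (hδle j i) (hprnonneg j)
  -- convergence for every v
  have hconv : ∀ v : Fin n → ℝ,
      Tendsto (fun k : ℕ => (Cᵀ ^ k) *ᵥ v) atTop (𝓝 ((∑ i, v i) • pr)) := by
    intro v
    set s : ℝ := ∑ i, v i with hsdef
    set w : Fin n → ℝ := v - s • pr with hwdef
    have hwsum : ∑ i, w i = 0 := by
      have h1 : ∑ i, w i = (∑ i, v i) - s * ∑ i, pr i := by
        simp [hwdef, Finset.sum_sub_distrib, Finset.mul_sum]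
      rw [h1, hprsum, mul_one, hsdef, sub_self]
    have hfixk : ∀ k, (Cᵀ ^ k) *ᵥ pr = pr := by
      intro k
      induction k with
      | zero => simp
      | succ k ih => rw [pow_succ', ← Matrix.mulVec_mulVec, ih, hfix]
    have hsplit : ∀ k, (Cᵀ ^ k) *ᵥ v = s • pr + (Cᵀ ^ k) *ᵥ w := by
      intro k
      have : v = s • pr + w := by simp [hwdef]
      rw [this, Matrix.mulVec_add, Matrix.mulVec_smul, hfixk]
    rw [tendsto_pi_nhds]
    intro i
    have hW := fun k => (aux_iter C δ hδle hnδ hstoch w hwsum k).2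
    have hτlim : Tendsto (fun k : ℕ => τ ^ k * ∑ j, |w j|) atTop (𝓝 0) := by
      simpa using (tendsto_pow_atTop_nhds_zero_of_lt_one hτ0 hτ1).mul_const
        (∑ j, |w j|)
    have h0 : Tendsto (fun k => ((Cᵀ ^ k) *ᵥ w) i) atTop (𝓝 0) := by
      rw [tendsto_zero_iff_abs_tendsto_zero]
      refine squeeze_zero (fun k => abs_nonneg _) (fun k => ?_) hτlim
      refine le_trans ?_ (hW k)
      exact Finset.single_le_sum (f := fun j => |((Cᵀ ^ k) *ᵥ w) j|)
        (fun j _ => abs_nonneg _) (Finset.mem_univ i)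
    have : Tendsto (fun k => (s • pr) i + ((Cᵀ ^ k) *ᵥ w) i) atTop
        (𝓝 ((s • pr) i + 0)) := tendsto_const_nhds.add h0
    rw [add_zero] at this
    refine this.congr fun k => ?_
    rw [hsplit k]; rfl
  refine ⟨pr, ⟨hprnonneg, hprsum, hfix⟩, ?_, hprpos, hconv⟩
  -- uniqueness
  intro pr' ⟨hn', hs', hf'⟩
  have hdsum : ∑ i, (pr' - pr) i = 0 := by
    simp [Finset.sum_sub_distrib, hs', hprsum]
  have hdfix : Cᵀ *ᵥ (pr' - pr) = pr' - pr := by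
    rw [Matrix.mulVec_sub, hf', hfix]
  have hkey := aux_contract C δ hδle hstoch (pr' - pr) hdsum
  rw [hdfix] at hkey
  have hS0 : ∑ i, |(pr' - pr) i| ≤ 0 := by
    by_contra h
    push_neg at h
    have : (0:ℝ) < (n : ℝ) * δ := by positivity
    nlinarith
  have : ∀ i, (pr' - pr) i = 0 := by
    intro i
    have h1 : |(pr' - pr) i| ≤ 0 := le_trans (Finset.single_le_sum
      (f := fun j => |(pr' - pr) j|) (fun j _ => abs_nonneg _)
      (Finset.mem_univ i)) hS0
    exact abs_eq_zero.1 (le_antisymm h1 (abs_nonneg _))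
  funext i
  have := this i
  simp only [Pi.sub_apply] at this
  linarith
end

section
/- Let A be an n×n irreducible matrix over the max-plus algebra ℝ_max with n ≥ 2. Then A has an eigenvalue λ ∈ ℝ (in particular λ ≠ ε): there exists a vector v ≠ (ε,…,ε) such that max_j (A_{ij} + v_j) = λ + v_i for all i. -/
/-- Max-plus matrix–vector product over `ℝ_max = ℝ ∪ {−∞}` (modelled as `WithBot ℝ`):
`(A ⊗ v) i = max_j (A i j + v j)`. -/
def mpMulVec {n : ℕ} (A : Matrix (Fin n) (Fin n) (WithBot ℝ)) (v : Fin n → WithBot ℝ) :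
    Fin n → WithBot ℝ :=
  fun i => Finset.univ.sup fun j => A i j + v j

/-- Max-plus matrix product: `(A ⊗ B) i j = max_k (A i k + B k j)`. -/
def mpMul {n : ℕ} (A B : Matrix (Fin n) (Fin n) (WithBot ℝ)) :
    Matrix (Fin n) (Fin n) (WithBot ℝ) :=
  Matrix.of fun i j => Finset.univ.sup fun k => A i k + B k j

/-- The max-plus identity matrix: `e = 0` on the diagonal, `ε = −∞` elsewhere. -/
def mpId (n : ℕ) : Matrix (Fin n) (Fin n) (WithBot ℝ) :=
  Matrix.of fun i j => if i = j then ((0 : ℝ) : WithBot ℝ) else ⊥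

/-- Max-plus matrix power: `A^{⊗0} = E_n`, `A^{⊗(k+1)} = A ⊗ A^{⊗k}`. -/
def mpPow {n : ℕ} (A : Matrix (Fin n) (Fin n) (WithBot ℝ)) : ℕ → Matrix (Fin n) (Fin n) (WithBot ℝ)
  | 0 => mpId n
  | k + 1 => mpMul A (mpPow A k)

/-- The max-plus trace: the maximum of the diagonal entries. -/
def mpTrace {n : ℕ} (M : Matrix (Fin n) (Fin n) (WithBot ℝ)) : WithBot ℝ :=
  Finset.univ.sup fun i => M i i

/-- A max-plus matrix is *irreducible* if no simultaneous row/column permutation puts it in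
block upper-triangular form (with two nontrivial square diagonal blocks and an `ε`-block
below the diagonal). -/
def MPIrred {n : ℕ} (A : Matrix (Fin n) (Fin n) (WithBot ℝ)) : Prop :=
  ¬ ∃ (σ : Equiv.Perm (Fin n)) (k : ℕ), 0 < k ∧ k < n ∧
      ∀ i j : Fin n, k ≤ (i : ℕ) → (j : ℕ) < k → A (σ i) (σ j) = ⊥


namespace MPAux
variable {n : ℕ}
def mpPow' {n : ℕ} (A : Matrix (Fin n) (Fin n) (WithBot ℝ)) : ℕ → Matrix (Fin n) (Fin n) (WithBot ℝ)
  | 0 => Matrix.of fun i j => if i = j then ((0 : ℝ) : WithBot ℝ) else ⊥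
  | k + 1 => Matrix.of fun i j => Finset.univ.sup fun m => A i m + mpPow' A k m j

/-- endpoint of the path starting at `i` with successive vertices `l` -/
def ep (i : Fin n) (l : List (Fin n)) : Fin n := l.getLastD i

/-- weight of the path starting at `i` with successive vertices `l` -/
def wt (M : Matrix (Fin n) (Fin n) (WithBot ℝ)) : Fin n → List (Fin n) → WithBot ℝ
  | _, [] => 0
  | i, j :: l => M i j + wt M j l

@[simp] lemma ep_nil (i : Fin n) : ep i ([] : List (Fin n)) = i := rfl
@[simp] lemma ep_cons (i a : Fin n) (l : List (Fin n)) : ep i (a :: l) = ep a l :=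
  List.getLastD_cons
@[simp] lemma ep_concat (i a : Fin n) (l : List (Fin n)) : ep i (l ++ [a]) = a :=
  List.getLastD_concat

lemma ep_append (i : Fin n) (l1 l2 : List (Fin n)) : ep i (l1 ++ l2) = ep (ep i l1) l2 := by
  induction l1 generalizing i with
  | nil => simp
  | cons a l ih => simp [ih]

lemma wt_append (M : Matrix (Fin n) (Fin n) (WithBot ℝ)) (i : Fin n) (l1 l2 : List (Fin n)) :
    wt M i (l1 ++ l2) = wt M i l1 + wt M (ep i l1) l2 := by
  induction l1 generalizing i with
  | nil => simp [wt]
  | cons a l ih => simp [wt, ih, add_assoc]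

/-- any non-nodup list decomposes around a duplicated element -/
lemma exists_dup_decomp {α : Type*} (t : List α) (h : ¬ t.Nodup) :
    ∃ (u : List α) (x : α) (w1 w2 : List α), t = u ++ x :: (w1 ++ x :: w2) := by
  induction t with
  | nil => simp at h
  | cons a t ih =>
    rw [List.nodup_cons] at h
    push_neg at h
    by_cases ha : a ∈ t
    · obtain ⟨s, r, rfl⟩ := List.append_of_mem ha
      exact ⟨[], a, s, r, by simp⟩
    · obtain ⟨u, x, w1, w2, rfl⟩ := ih (h ha)
      exact ⟨a :: u, x, w1, w2, by simp⟩

/-- key decomposition: a path of length > n contains a short nonempty closed subpath -/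
lemma exists_cycle_decomp (i : Fin n) (l : List (Fin n)) (hl : n < l.length) :
    ∃ p c s : List (Fin n), l = p ++ c ++ s ∧ c ≠ [] ∧ c.length ≤ n ∧
      ep i (p ++ c) = ep i p := by
  have hlen : ((i :: l).take (n+1)).length = n + 1 := by
    simp; omega
  have hnd : ¬ ((i :: l).take (n+1)).Nodup := by
    intro h
    have := h.length_le_card
    rw [hlen] at this
    simp at this
  obtain ⟨u, x, w1, w2, hdec⟩ := exists_dup_decomp _ hnd
  have hrest : i :: l = u ++ x :: (w1 ++ x :: (w2 ++ (i :: l).drop (n+1))) := by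
    conv_lhs => rw [← List.take_append_drop (n+1) (i :: l)]
    rw [hdec]; simp
  generalize hr : (i :: l).drop (n+1) = r at hrest
  have hshort : u.length + w1.length + 1 ≤ n := by
    have := congrArg List.length hdec
    simp [hlen] at this
    omega
  cases u with
  | nil =>
    simp only [List.nil_append] at hrest
    have hi : i = x := (List.cons.injEq _ _ _ _).mp hrest |>.1
    have hl' : l = w1 ++ x :: (w2 ++ r) :=
      (List.cons.injEq _ _ _ _).mp hrest |>.2
    refine ⟨[], w1 ++ [x], w2 ++ r, ?_, by simp, by simp; omega, ?_⟩
    · simpa using hl'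
    · simp [hi]
  | cons a u' =>
    have hi : i = a := (List.cons.injEq _ _ _ _).mp hrest |>.1
    have hl' : l = u' ++ x :: (w1 ++ x :: (w2 ++ r)) :=
      (List.cons.injEq _ _ _ _).mp hrest |>.2
    refine ⟨u' ++ [x], w1 ++ [x], w2 ++ r, ?_, by simp, by simp; omega, ?_⟩
    · rw [hl']; simp
    · rw [ep_append, ep_concat, ep_concat]


variable {M : Matrix (Fin n) (Fin n) (WithBot ℝ)}

lemma add_sup' (c : WithBot ℝ) {ι : Type*} (s : Finset ι) (f : ι → WithBot ℝ) :
    c + s.sup f = s.sup fun x => c + f x := by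
  have := Finset.comp_sup_eq_sup_comp (s := s) (f := f) (fun x : WithBot ℝ => c + x)
    (fun x y => by
      rcases le_total x y with h | h
      · simp [max_eq_right h, max_eq_right (add_le_add_right h c)]
      · simp [max_eq_left h, max_eq_left (add_le_add_right h c)])
    (by simp)
  simpa [Function.comp_def] using this

lemma wt_le_pow : ∀ (l : List (Fin n)) (i j : Fin n), ep i l = j →
    wt M i l ≤ mpPow' M l.length i j := by
  intro l
  induction l with
  | nil =>
    intro i j h
    simp only [ep_nil] at h
    subst h
    simp [wt, mpPow']
  | cons a l ih =>
    intro i j h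
    simp only [ep_cons] at h
    calc wt M i (a :: l) = M i a + wt M a l := rfl
      _ ≤ M i a + mpPow' M l.length a j := add_le_add_right (ih a j h) _
      _ ≤ mpPow' M (a :: l).length i j := by
          simp only [List.length_cons, mpPow', Matrix.of_apply]
          exact Finset.le_sup (f := fun m => M i m + mpPow' M l.length m j) (Finset.mem_univ a)

lemma pow_attained (hn : 0 < n) : ∀ (k : ℕ) (i j : Fin n), mpPow' M k i j = ⊥ ∨
    ∃ l : List (Fin n), l.length = k ∧ ep i l = j ∧ wt M i l = mpPow' M k i j := by
  intro k
  induction k with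
  | zero =>
    intro i j
    by_cases h : i = j
    · subst h
      exact Or.inr ⟨[], rfl, rfl, by simp [wt, mpPow']⟩
    · exact Or.inl (by simp [mpPow', h])
  | succ k ih =>
    intro i j
    have hne : (Finset.univ : Finset (Fin n)).Nonempty := ⟨⟨0, hn⟩, Finset.mem_univ _⟩
    obtain ⟨m, -, hm⟩ := Finset.exists_mem_eq_sup Finset.univ hne
      (fun m => M i m + mpPow' M k m j)
    have hpow : mpPow' M (k+1) i j = M i m + mpPow' M k m j := hm
    by_cases hbot : M i m + mpPow' M k m j = ⊥
    · exact Or.inl (hpow.trans hbot)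
    · rcases ih m j with h2 | ⟨l, hlen, hep, hwt⟩
      · exact absurd (WithBot.add_eq_bot.mpr (Or.inr h2)) hbot
      · refine Or.inr ⟨m :: l, by simp [hlen], by simp [hep], ?_⟩
        rw [hpow]
        simp [wt, hwt]


open Finset in
lemma exists_perm (S : Finset (Fin n)) (h1 : S.Nonempty) (h2 : S ≠ Finset.univ) :
    ∃ σ : Equiv.Perm (Fin n), ∀ i : Fin n, ((i : ℕ) < S.card ↔ σ i ∈ S) := by
  classical
  have hcompl : Sᶜ.card = n - S.card := by
    rw [Finset.card_compl, Fintype.card_fin]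
  have hcard : S.card ≤ n := by
    simpa using Finset.card_le_card (Finset.subset_univ S)
  let f : Fin n → Fin n := fun i =>
    if h : (i : ℕ) < S.card then ((S.orderIsoOfFin rfl) ⟨(i : ℕ), h⟩ : {x // x ∈ S}).1
    else ((Sᶜ.orderIsoOfFin hcompl) ⟨(i : ℕ) - S.card, by have := i.isLt; omega⟩ : {x // x ∈ Sᶜ}).1
  have hfS : ∀ i : Fin n, ((i : ℕ) < S.card ↔ f i ∈ S) := by
    intro i
    by_cases h : (i : ℕ) < S.card
    · simp only [f, dif_pos h]
      exact ⟨fun _ => ((S.orderIsoOfFin rfl) ⟨(i : ℕ), h⟩).2, fun _ => h⟩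
    · simp only [f, dif_neg h]
      constructor
      · intro hc; exact absurd hc h
      · intro hc
        exact absurd hc (Finset.mem_compl.mp ((Sᶜ.orderIsoOfFin hcompl) _).2)
  have hinj : Function.Injective f := by
    intro i j hf
    by_cases hi : (i : ℕ) < S.card <;> by_cases hj : (j : ℕ) < S.card
    · simp only [f, dif_pos hi, dif_pos hj] at hf
      have := (S.orderIsoOfFin rfl).injective (Subtype.ext hf)
      exact Fin.ext (by simpa using congrArg Fin.val this)
    · exact absurd ((hfS j).mpr (hf ▸ (hfS i).mp hi)) hj
    · exact absurd ((hfS i).mpr (hf.symm ▸ (hfS j).mp hj)) hi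
    · simp only [f, dif_neg hi, dif_neg hj] at hf
      have := (Sᶜ.orderIsoOfFin hcompl).injective (Subtype.ext hf)
      have h2 := congrArg Fin.val this
      simp only [Fin.val_mk] at h2
      have hi' := i.isLt
      have hj' := j.isLt
      exact Fin.ext (by omega)
  exact ⟨Equiv.ofBijective f (Finite.injective_iff_bijective.mp hinj),
    fun i => hfS i⟩

lemma reach_of_irred (hn : 2 ≤ n) (A : Matrix (Fin n) (Fin n) (WithBot ℝ))
    (hirr : MPIrred A) (i0 j0 : Fin n) (hij : i0 ≠ j0) :
    ∃ l, l ≠ [] ∧ ep i0 l = j0 ∧ wt A i0 l ≠ ⊥ := by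
  by_contra h
  push_neg at h
  apply hirr
  classical
  let T : Finset (Fin n) :=
    Finset.univ.filter (fun x => x = j0 ∨ ∃ l, l ≠ [] ∧ ep x l = j0 ∧ wt A x l ≠ ⊥)
  have hmemT : ∀ x, x ∈ T ↔ (x = j0 ∨ ∃ l, l ≠ [] ∧ ep x l = j0 ∧ wt A x l ≠ ⊥) := by
    intro x; simp [T]
  have hTj : j0 ∈ T := (hmemT j0).mpr (Or.inl rfl)
  have hTi : i0 ∉ T := by
    rw [hmemT]
    push_neg
    exact ⟨hij, fun l h1 h2 => h l h1 h2⟩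
  have hclosed : ∀ x y, y ∈ T → A x y ≠ ⊥ → x ∈ T := by
    intro x y hy hA
    rcases (hmemT y).mp hy with rfl | ⟨l, hl1, hl2, hl3⟩
    · refine (hmemT x).mpr (Or.inr ⟨[y], by simp, rfl, ?_⟩)
      simpa [wt] using hA
    · refine (hmemT x).mpr (Or.inr ⟨y :: l, by simp, by simp [hl2], ?_⟩)
      simp only [wt]
      exact fun hc => (WithBot.add_eq_bot.mp hc).elim hA hl3
  obtain ⟨σ, hσ⟩ := exists_perm T ⟨j0, hTj⟩ (fun hc => hTi (hc ▸ Finset.mem_univ i0))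
  have hcardlt : T.card < n := by
    have : T ⊂ Finset.univ := Finset.ssubset_univ_iff.mpr
      (fun hc => hTi (hc ▸ Finset.mem_univ i0))
    simpa using Finset.card_lt_card this
  refine ⟨σ, T.card, Finset.card_pos.mpr ⟨j0, hTj⟩, hcardlt, ?_⟩
  intro i j hi hj
  by_contra hAne
  have hσiT : σ i ∈ T := hclosed (σ i) (σ j) ((hσ j).mp hj) hAne
  have := (hσ i).mpr hσiT
  omega


lemma le_pow_succ (M : Matrix (Fin n) (Fin n) (WithBot ℝ)) (k : ℕ) (i m j : Fin n) :
    M i m + mpPow' M k m j ≤ mpPow' M (k+1) i j :=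
  Finset.le_sup (f := fun m => M i m + mpPow' M k m j) (Finset.mem_univ m)

lemma wt_shift (A : Matrix (Fin n) (Fin n) (WithBot ℝ)) (r : ℝ) :
    ∀ (l : List (Fin n)) (i : Fin n),
      wt (Matrix.of fun i j => A i j + ((r : ℝ) : WithBot ℝ)) i l
        = wt A i l + (((l.length : ℝ) * r : ℝ) : WithBot ℝ) := by
  intro l
  induction l with
  | nil => intro i; simp [wt]
  | cons a l ih =>
    intro i
    have hcast : (((a :: l).length : ℝ) * r : ℝ)
        = ((l.length : ℝ) * r) + r := by push_cast [List.length_cons]; ring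
    calc wt (Matrix.of fun i j => A i j + ((r : ℝ) : WithBot ℝ)) i (a :: l)
        = (A i a + (r : WithBot ℝ)) + (wt A a l + (((l.length : ℝ) * r : ℝ) : WithBot ℝ)) := by
          simp only [wt, Matrix.of_apply, ih]
      _ = (A i a + wt A a l) + ((((l.length : ℝ) * r) : ℝ) + (r : ℝ) : WithBot ℝ) := by
          abel
      _ = wt A i (a :: l) + (((a :: l).length : ℝ) * r : ℝ) := by
          rw [← WithBot.coe_add, ← hcast]; rfl

end MPAux


/-- **Existence of a finite max-plus eigenvalue for irreducible matrices.**  An `n × n`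
irreducible max-plus matrix (`n ≥ 2`) has an eigenvalue `λ ∈ ℝ` (in particular `λ ≠ ε`):
there is a vector `v ≠ (ε,…,ε)` with `max_j (A i j + v j) = λ + v i` for all `i`. -/
theorem stmt_8 {n : ℕ} (hn : 2 ≤ n) (A : Matrix (Fin n) (Fin n) (WithBot ℝ))
    (hirr : MPIrred A) :
    ∃ lam : ℝ, ∃ v : Fin n → WithBot ℝ, (¬ ∀ i, v i = ⊥) ∧
      ∀ i, mpMulVec A v i = ((lam : ℝ) : WithBot ℝ) + v i := by
  classical
  open MPAux in
  have hn0 : 0 < n := by omega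
  -- Step 1: a short finite-weight closed path exists
  have hcyc : ∃ (x : Fin n) (c : List (Fin n)), c ≠ [] ∧ c.length ≤ n ∧ ep x c = x ∧
      wt A x c ≠ ⊥ := by
    have h01 : (⟨0, by omega⟩ : Fin n) ≠ ⟨1, by omega⟩ := by simp [Fin.ext_iff]
    obtain ⟨l1, h1ne, h1ep, h1wt⟩ := reach_of_irred hn A hirr ⟨0, by omega⟩ ⟨1, by omega⟩ h01
    obtain ⟨l2, h2ne, h2ep, h2wt⟩ := reach_of_irred hn A hirr ⟨1, by omega⟩ ⟨0, by omega⟩ h01.symm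
    set i : Fin n := ⟨0, by omega⟩ with hi
    have hl : ep i (l1 ++ l2) = i := by rw [ep_append, h1ep, h2ep]
    have hw : wt A i (l1 ++ l2) ≠ ⊥ := by
      rw [wt_append, h1ep]
      exact fun hc => (WithBot.add_eq_bot.mp hc).elim h1wt h2wt
    by_cases hlen : (l1 ++ l2).length ≤ n
    · exact ⟨i, l1 ++ l2, by simp [h1ne], hlen, hl, hw⟩
    · obtain ⟨p, c, s, hdec, hcne, hclen, hcep⟩ :=
        exists_cycle_decomp i (l1 ++ l2) (lt_of_not_ge hlen)
      have hsplit : wt A i (l1 ++ l2)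
          = wt A i p + wt A (ep i p) c + wt A (ep i (p ++ c)) s := by
        rw [hdec, wt_append, wt_append]
      refine ⟨ep i p, c, hcne, hclen, ?_, ?_⟩
      · rw [← ep_append]; exact hcep
      · intro hc
        exact hw (by rw [hsplit, hc, WithBot.add_bot, WithBot.bot_add])
  obtain ⟨x0, c0, hc0ne, hc0len, hc0ep, hc0wt⟩ := hcyc
  -- Step 2: the maximum cycle mean
  let F : Finset (Fin n × ℕ) :=
    (Finset.univ ×ˢ Finset.Icc 1 n).filter (fun p => mpPow' A p.2 p.1 p.1 ≠ ⊥)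
  have hmemF : ∀ p : Fin n × ℕ, p ∈ F ↔ (1 ≤ p.2 ∧ p.2 ≤ n ∧ mpPow' A p.2 p.1 p.1 ≠ ⊥) := by
    intro p; simp [F, Finset.mem_Icc, and_assoc]
  have hwtpow : ∀ (x : Fin n) (c : List (Fin n)), ep x c = x → wt A x c ≠ ⊥ →
      mpPow' A c.length x x ≠ ⊥ := by
    intro x c hep hwt hb
    exact hwt (le_bot_iff.mp (hb ▸ wt_le_pow c x x hep))
  have hFx : (⟨x0, c0.length⟩ : Fin n × ℕ) ∈ F := by
    rw [hmemF]
    exact ⟨List.length_pos_iff.mpr hc0ne, hc0len, hwtpow x0 c0 hc0ep hc0wt⟩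
  have hFne : F.Nonempty := ⟨_, hFx⟩
  let g : Fin n × ℕ → ℝ := fun p => WithBot.unbotD 0 (mpPow' A p.2 p.1 p.1) / p.2
  let lam : ℝ := F.sup' hFne g
  -- the shifted matrix B
  let B : Matrix (Fin n) (Fin n) (WithBot ℝ) :=
    Matrix.of fun i j => A i j + (((-lam : ℝ) : ℝ) : WithBot ℝ)
  have hBwt : ∀ (l : List (Fin n)) (i : Fin n),
      wt B i l = wt A i l + (((l.length : ℝ) * (-lam) : ℝ) : WithBot ℝ) :=
    fun l i => wt_shift A (-lam) l i
  -- P1: closed paths of length in [1,n] have nonpositive B-weight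
  have hP1 : ∀ (x : Fin n) (c : List (Fin n)), c ≠ [] → c.length ≤ n → ep x c = x →
      wt B x c ≤ 0 := by
    intro x c hne hlen hep
    rw [hBwt]
    by_cases hwt : wt A x c = ⊥
    · rw [hwt, WithBot.bot_add]; exact bot_le
    · obtain ⟨y, hy⟩ := WithBot.ne_bot_iff_exists.mp hwt
      have hpow := wt_le_pow (M := A) c x x hep
      have hpownb : mpPow' A c.length x x ≠ ⊥ := hwtpow x c hep hwt
      obtain ⟨e, he⟩ := WithBot.ne_bot_iff_exists.mp hpownb
      have hmem : (⟨x, c.length⟩ : Fin n × ℕ) ∈ F :=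
        (hmemF _).mpr ⟨List.length_pos_iff.mpr hne, hlen, hpownb⟩
      have hg : g ⟨x, c.length⟩ ≤ lam := Finset.le_sup' g hmem
      have hgval : g ⟨x, c.length⟩ = e / c.length := by
        simp only [g, ← he, WithBot.unbotD_coe]
      have hclen1 : (1 : ℝ) ≤ (c.length : ℝ) := by
        exact_mod_cast List.length_pos_iff.mpr hne
      have helam : e ≤ lam * c.length := by
        rw [hgval] at hg
        rw [div_le_iff₀ (by linarith)] at hg
        linarith [hg]
      have hye : y ≤ e := by
        rw [← hy, ← he] at hpow
        exact_mod_cast hpow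
      rw [← hy, ← WithBot.coe_add]
      exact_mod_cast (by nlinarith : y + (c.length : ℝ) * (-lam) ≤ 0)
  -- Step 3: critical node jstar with a zero-weight cycle
  obtain ⟨q, hqF, hq⟩ := Finset.exists_mem_eq_sup' hFne g
  obtain ⟨hq1, hq2, hq3⟩ := (hmemF q).mp hqF
  obtain ⟨e, he⟩ := WithBot.ne_bot_iff_exists.mp hq3
  set jstar : Fin n := q.1 with hjstar
  have helam : e = lam * q.2 := by
    have : lam = e / q.2 := by
      have h' : lam = g q := hq
      rw [h']; simp only [g, ← hjstar, ← he, WithBot.unbotD_coe]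
    rw [this]
    field_simp
  obtain ⟨cs, hcslen, hcsep, hcswt⟩ :=
    (pow_attained (M := A) hn0 q.2 jstar jstar).resolve_left hq3
  have hcrit : wt B jstar cs = 0 := by
    rw [hBwt, hcswt, ← he, hcslen, ← WithBot.coe_add]
    rw [show (e : ℝ) + (q.2 : ℝ) * (-lam) = 0 by rw [helam]; ring]
    rfl
  -- Step 4: the eigenvector
  set v : Fin n → WithBot ℝ := fun i => (Finset.Icc 1 n).sup (fun k => mpPow' B k i jstar)
    with hv
  have hvj : (0 : WithBot ℝ) ≤ v jstar := by
    calc (0 : WithBot ℝ) = wt B jstar cs := hcrit.symm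
      _ ≤ mpPow' B cs.length jstar jstar := wt_le_pow cs jstar jstar hcsep
      _ ≤ v jstar := by
          have hmem : cs.length ∈ Finset.Icc 1 n := Finset.mem_Icc.mpr ⟨by omega, by omega⟩
          exact Finset.le_sup (f := fun k => mpPow' B k jstar jstar) hmem
  -- (c) paths to jstar of length in [1,n] are bounded by v
  have hpathv : ∀ (i : Fin n) (l : List (Fin n)), l ≠ [] → l.length ≤ n → ep i l = jstar →
      wt B i l ≤ v i := by
    intro i l hne hlen hep
    calc wt B i l ≤ mpPow' B l.length i jstar := wt_le_pow l i jstar hep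
      _ ≤ v i := Finset.le_sup (f := fun k => mpPow' B k i jstar)
          (Finset.mem_Icc.mpr ⟨List.length_pos_iff.mpr hne, hlen⟩)
  -- (d) the (n+1)-st power column is bounded by v
  have hpow_succ_le : ∀ i : Fin n, mpPow' B (n+1) i jstar ≤ v i := by
    intro i
    rcases pow_attained (M := B) hn0 (n+1) i jstar with hb | ⟨l, hlen, hep, hwt⟩
    · rw [hb]; exact bot_le
    · rw [← hwt]
      obtain ⟨p, c, s, hdec, hcne, hclen, hcep⟩ := exists_cycle_decomp i l (by omega)
      have hxc : ep (ep i p) c = ep i p := by rw [← ep_append]; exact hcep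
      have hcw : wt B (ep i p) c ≤ 0 := hP1 (ep i p) c hcne hclen hxc
      have hwle : wt B i l ≤ wt B i (p ++ s) := by
        rw [hdec, wt_append, wt_append, hcep, wt_append]
        calc wt B i p + wt B (ep i p) c + wt B (ep i p) s
            ≤ wt B i p + 0 + wt B (ep i p) s :=
              add_le_add_left (add_le_add_right hcw _) _
          _ = wt B i p + wt B (ep i p) s := by rw [add_zero]
      have heps : ep i (p ++ s) = jstar := by
        rw [hdec, ep_append, hcep, ← ep_append] at hep
        exact hep
      have hlens : (p ++ s).length ≤ n ∧ p ++ s ≠ [] := by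
        have h1 := congrArg List.length hdec
        have h2 := List.length_pos_iff.mpr hcne
        simp only [List.length_append] at h1 ⊢
        constructor
        · omega
        · intro hc
          have := congrArg List.length hc
          simp only [List.length_append, List.length_nil] at this
          omega
      exact hwle.trans (hpathv i (p ++ s) hlens.2 hlens.1 heps)
  -- (e) v is a fixed point of B
  have heig : ∀ i, mpMulVec B v i = v i := by
    intro i
    apply le_antisymm
    · refine Finset.sup_le ?_
      intro j _
      have hvj' : v j = (Finset.Icc 1 n).sup (fun k => mpPow' B k j jstar) := rfl
      rw [hvj', add_sup' (B i j)]
      refine Finset.sup_le ?_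
      intro k hk
      rw [Finset.mem_Icc] at hk
      have h1 : B i j + mpPow' B k j jstar ≤ mpPow' B (k+1) i jstar := le_pow_succ B k i j jstar
      by_cases hkn : k + 1 ≤ n
      · exact h1.trans (Finset.le_sup (f := fun k => mpPow' B k i jstar)
          (Finset.mem_Icc.mpr ⟨by omega, hkn⟩))
      · have hkn' : k = n := by omega
        subst hkn'
        exact h1.trans (hpow_succ_le i)
    · refine Finset.sup_le ?_
      intro k hk
      rw [Finset.mem_Icc] at hk
      obtain ⟨m, rfl⟩ : ∃ m, k = m + 1 := ⟨k - 1, by omega⟩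
      show Finset.univ.sup (fun j => B i j + mpPow' B m j jstar) ≤ mpMulVec B v i
      refine Finset.sup_le ?_
      intro j _
      by_cases hm : m = 0
      · subst hm
        by_cases hj : j = jstar
        · subst hj
          have h0 : mpPow' B 0 jstar jstar = ((0 : ℝ) : WithBot ℝ) := by simp [mpPow']
          rw [h0]
          calc B i jstar + ((0 : ℝ) : WithBot ℝ) = B i jstar := by
                rw [WithBot.coe_zero, add_zero]
            _ = B i jstar + 0 := (add_zero _).symm
            _ ≤ B i jstar + v jstar := add_le_add_right hvj _
            _ ≤ mpMulVec B v i := Finset.le_sup (f := fun j => B i j + v j) (Finset.mem_univ jstar)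
        · have h0 : mpPow' B 0 j jstar = ⊥ := by simp [mpPow', hj]
          rw [h0, WithBot.add_bot]
          exact bot_le
      · have hmv : mpPow' B m j jstar ≤ v j :=
          Finset.le_sup (f := fun k => mpPow' B k j jstar) (Finset.mem_Icc.mpr ⟨by omega, by omega⟩)
        calc B i j + mpPow' B m j jstar ≤ B i j + v j := add_le_add_right hmv _
          _ ≤ mpMulVec B v i := Finset.le_sup (f := fun j => B i j + v j) (Finset.mem_univ j)
  -- conclusion
  refine ⟨lam, v, ?_, ?_⟩
  · intro hall
    rw [hall jstar] at hvj
    exact absurd hvj (by simp)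
  · intro i
    have hAB : mpMulVec A v i = ((lam : ℝ) : WithBot ℝ) + mpMulVec B v i := by
      show Finset.univ.sup (fun j => A i j + v j)
          = ((lam : ℝ) : WithBot ℝ) + Finset.univ.sup (fun j => B i j + v j)
      rw [add_sup' ((lam : ℝ) : WithBot ℝ)]
      refine Finset.sup_congr rfl ?_
      intro j _
      have hB : B i j = A i j + ((-lam : ℝ) : WithBot ℝ) := rfl
      rw [hB]
      have : ((lam : ℝ) : WithBot ℝ) + (A i j + ((-lam : ℝ) : WithBot ℝ) + v j)
          = (((lam : ℝ) : WithBot ℝ) + ((-lam : ℝ) : WithBot ℝ)) + (A i j + v j) := by abel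
      rw [this, ← WithBot.coe_add]
      norm_num
    rw [hAB, heig i]
end

section
/- Let A be an n×n irreducible matrix over the max-plus algebra ℝ_max with n ≥ 2. Then the eigenvalue of A is unique: any two eigenvalues λ, μ of A (each admitting an eigenvector ≠ (ε,…,ε)) satisfy λ = μ, and this unique eigenvalue λ₀ is given by λ₀ = max_{1 ≤ i ≤ n} ( (1/i) · max_{1 ≤ j ≤ n} (A^{⊗i})_{jj} ), i.e. λ₀ = ⊕_{i=1}^{n} tr(A^{⊗i})^{1/i} where tr denotes the max-plus trace (the maximum of the diagonal entries) and the i-th root is division by i in conventional arithmetic, terms equal to ε being discarded. -/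
open Finset

lemma add_fsup {ι : Type*} (a : WithBot ℝ) (s : Finset ι) (f : ι → WithBot ℝ) :
    a + s.sup f = s.sup fun i => a + f i := by
  have hm : Monotone (fun x : WithBot ℝ => a + x) := fun u v h => add_le_add_right h a
  have := Finset.comp_sup_eq_sup_comp (s := s) (f := f) (g := fun x : WithBot ℝ => a + x)
    (fun x y => hm.map_max) (WithBot.add_bot a)
  simpa [Function.comp_def] using this

lemma fsup_add {ι : Type*} (a : WithBot ℝ) (s : Finset ι) (f : ι → WithBot ℝ) :
    s.sup f + a = s.sup fun i => f i + a := by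
  simp only [add_comm _ a]; exact add_fsup a s f

lemma mpMulVec_mpMul {n : ℕ} (A B : Matrix (Fin n) (Fin n) (WithBot ℝ))
    (v : Fin n → WithBot ℝ) :
    mpMulVec (mpMul A B) v = mpMulVec A (mpMulVec B v) := by
  funext i
  simp only [mpMulVec, mpMul, Matrix.of_apply]
  simp only [fsup_add, add_fsup, add_assoc]
  exact Finset.sup_comm _ _ _

lemma mpMulVec_const_add {n : ℕ} (A : Matrix (Fin n) (Fin n) (WithBot ℝ))
    (c : WithBot ℝ) (v : Fin n → WithBot ℝ) (i : Fin n) :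
    mpMulVec A (fun j => c + v j) i = c + mpMulVec A v i := by
  simp only [mpMulVec, add_fsup]
  congr 1; funext j; rw [add_left_comm]

lemma mpMulVec_id {n : ℕ} (v : Fin n → WithBot ℝ) (i : Fin n) :
    mpMulVec (mpId n) v i = v i := by
  apply le_antisymm
  · apply Finset.sup_le
    intro j _
    by_cases h : i = j
    · subst h; simp [mpId]
    · simp [mpId, h]
  · have := Finset.le_sup (f := fun j => mpId n i j + v j) (Finset.mem_univ i)
    simpa [mpId, mpMulVec] using this

lemma mpPow_eigen {n : ℕ} (A : Matrix (Fin n) (Fin n) (WithBot ℝ)) (l : ℝ)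
    (v : Fin n → WithBot ℝ) (h : ∀ i, mpMulVec A v i = (l : WithBot ℝ) + v i) (k : ℕ) :
    ∀ i, mpMulVec (mpPow A k) v i = ((k * l : ℝ) : WithBot ℝ) + v i := by
  induction k with
  | zero => intro i; simp [mpPow, mpMulVec_id]
  | succ k ih =>
    intro i
    have : mpMulVec (mpPow A (k+1)) v = mpMulVec A (mpMulVec (mpPow A k) v) := by
      show mpMulVec (mpMul A (mpPow A k)) v = _
      exact mpMulVec_mpMul _ _ _
    rw [this]
    have hv : mpMulVec (mpPow A k) v = fun j => ((k * l : ℝ) : WithBot ℝ) + v j := funext ih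
    rw [hv, mpMulVec_const_add, h i, ← add_assoc]
    congr 1
    rw [← WithBot.coe_add]
    congr 1
    push_cast
    ring
lemma path_le_pow {n : ℕ} (A : Matrix (Fin n) (Fin n) (WithBot ℝ)) :
    ∀ (m : ℕ) (p : ℕ → Fin n),
      (∑ r ∈ Finset.range m, A (p r) (p (r+1))) ≤ mpPow A m (p 0) (p m) := by
  intro m
  induction m with
  | zero => intro p; simp [mpPow, mpId]
  | succ m ih =>
    intro p
    have h1 : A (p 0) (p 1) + mpPow A m (p 1) (p (m+1)) ≤ mpPow A (m+1) (p 0) (p (m+1)) := by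
      have := Finset.le_sup (f := fun k => A (p 0) k + mpPow A m k (p (m+1)))
        (Finset.mem_univ (p 1))
      simpa [mpPow, mpMul] using this
    refine le_trans ?_ h1
    rw [Finset.sum_range_succ']
    rw [add_comm]
    exact add_le_add_right (by simpa using ih (fun r => p (r+1))) _

lemma telescope {n : ℕ} (A : Matrix (Fin n) (Fin n) (WithBot ℝ)) (l : ℝ)
    (v : Fin n → WithBot ℝ) (p : ℕ → Fin n)
    (hp : ∀ r, A (p r) (p (r+1)) + v (p (r+1)) = (l : WithBot ℝ) + v (p r)) (m : ℕ) :
    (∑ r ∈ Finset.range m, A (p r) (p (r+1))) + v (p m)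
      = ((m * l : ℝ) : WithBot ℝ) + v (p 0) := by
  induction m with
  | zero => simp
  | succ m ih =>
    rw [Finset.sum_range_succ, add_assoc, hp m, add_left_comm, ih, ← add_assoc,
      ← WithBot.coe_add]
    congr 2
    push_cast; ring
lemma eigen_support {n : ℕ} (hn : 2 ≤ n) (A : Matrix (Fin n) (Fin n) (WithBot ℝ))
    (hirr : MPIrred A) (lam : WithBot ℝ) (v : Fin n → WithBot ℝ)
    (hv : ¬ ∀ i, v i = ⊥) (h : ∀ i, mpMulVec A v i = lam + v i) :
    (∀ i, v i ≠ ⊥) ∧ lam ≠ ⊥ := by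
  classical
  have key : ∀ i j, v i = ⊥ → v j ≠ ⊥ → A i j = ⊥ := by
    intro i j hi hj
    have hsup : mpMulVec A v i = ⊥ := by rw [h i, hi, WithBot.add_bot]
    have h2 : A i j + v j ≤ mpMulVec A v i := by
      simpa [mpMulVec] using
        Finset.le_sup (f := fun j => A i j + v j) (Finset.mem_univ j)
    rw [hsup] at h2
    rcases WithBot.add_eq_bot.1 (le_bot_iff.1 h2) with h' | h'
    · exact h'
    · exact absurd h' hj
  have hsupp : ∀ i, v i ≠ ⊥ := by
    by_contra hbad
    push_neg at hbad
    obtain ⟨i₀, hi₀⟩ := hbad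
    -- build permutation
    set p : Fin n → Prop := fun i => v i ≠ ⊥ with hp
    have : ∃ j, p j := by push_neg at hv; obtain ⟨j, hj⟩ := hv; exact ⟨j, hj⟩
    set k := Fintype.card {i // p i} with hk
    have hk1 : 1 ≤ k := Fintype.card_pos_iff.2 ⟨⟨this.choose, this.choose_spec⟩⟩
    have hkc : Fintype.card {i // ¬ p i} = n - k := by
      rw [Fintype.card_subtype_compl]; simp [hk]
    have hkn : k < n := by
      have : 1 ≤ Fintype.card {i // ¬ p i} :=
        Fintype.card_pos_iff.2 ⟨⟨i₀, by simp [hp, hi₀]⟩⟩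
      have hle : k + Fintype.card {i // ¬ p i} = n := by
        rw [hkc]
        have : k ≤ n := by
          rw [hk]; simpa using Fintype.card_subtype_le p
        omega
      omega
    have hsum : n = k + (n - k) := by omega
    have eT : Fin k ≃ {i // p i} := (Fintype.equivFinOfCardEq rfl).symm
    have eS : Fin (n - k) ≃ {i // ¬ p i} := (Fintype.equivFinOfCardEq hkc).symm
    let σ : Equiv.Perm (Fin n) :=
      (finCongr hsum).trans <| finSumFinEquiv.symm.trans <|
        (eT.sumCongr eS).trans (Equiv.sumCompl p)
    apply hirr
    refine ⟨σ, k, hk1, hkn, ?_⟩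
    intro i j hik hjk
    have hσi : ¬ p (σ i) := by
      have : finSumFinEquiv.symm (finCongr hsum i) =
          Sum.inr ⟨(i : ℕ) - k, by omega⟩ := by
        have : (finCongr hsum i) = Fin.natAdd k ⟨(i : ℕ) - k, by omega⟩ := by
          apply Fin.ext; simp; omega
        rw [this, finSumFinEquiv_symm_apply_natAdd]
      simp only [σ, Equiv.trans_apply, this, Equiv.sumCongr_apply, Sum.map_inr,
        Equiv.sumCompl_apply_inr]
      exact (eS ⟨(i : ℕ) - k, by omega⟩).2
    have hσj : p (σ j) := by
      have : finSumFinEquiv.symm (finCongr hsum j) =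
          Sum.inl ⟨(j : ℕ), hjk⟩ := by
        have : (finCongr hsum j) = Fin.castAdd (n - k) ⟨(j : ℕ), hjk⟩ := by
          apply Fin.ext; simp
        rw [this, finSumFinEquiv_symm_apply_castAdd]
      simp only [σ, Equiv.trans_apply, this, Equiv.sumCongr_apply, Sum.map_inl,
        Equiv.sumCompl_apply_inl]
      exact (eT ⟨(j : ℕ), hjk⟩).2
    apply key
    · simpa [hp] using hσi
    · exact hσj
  refine ⟨hsupp, ?_⟩
  intro hbot
  apply hirr
  refine ⟨Equiv.refl _, 1, one_pos, by omega, ?_⟩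
  intro i j _ _
  have hsup : mpMulVec A v (Equiv.refl _ i) = ⊥ := by
    rw [h _, hbot, WithBot.bot_add]
  have h2 : A (Equiv.refl _ i) (Equiv.refl _ j) + v j ≤ mpMulVec A v (Equiv.refl _ i) := by
    simpa [mpMulVec] using
      Finset.le_sup (f := fun j' => A (Equiv.refl _ i) j' + v j') (Finset.mem_univ j)
  rw [hsup] at h2
  rcases WithBot.add_eq_bot.1 (le_bot_iff.1 h2) with h' | h'
  · exact h'
  · exact absurd h' (hsupp j)
lemma eigen_eq_sup {n : ℕ} (hn : 2 ≤ n) (A : Matrix (Fin n) (Fin n) (WithBot ℝ))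
    (hirr : MPIrred A) (lam : WithBot ℝ)
    (hlam : ∃ v : Fin n → WithBot ℝ, (¬ ∀ i, v i = ⊥) ∧ ∀ i, mpMulVec A v i = lam + v i) :
    lam = (Finset.Icc 1 n).sup
        fun i => WithBot.map (fun x : ℝ => x / (i : ℝ)) (mpTrace (mpPow A i)) := by
  classical
  obtain ⟨v, hv, h⟩ := hlam
  obtain ⟨hsupp, hlb⟩ := eigen_support hn A hirr lam v hv h
  lift lam to ℝ using hlb with l
  apply le_antisymm
  · -- lower bound for the sup: some cycle attains l
    have hsel : ∀ i : Fin n, ∃ j, A i j + v j = (l : WithBot ℝ) + v i := by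
      intro i
      haveI : Nonempty (Fin n) := ⟨⟨0, by omega⟩⟩
      obtain ⟨j, -, hj⟩ := Finset.exists_mem_eq_sup Finset.univ
        (Finset.univ_nonempty (α := Fin n)) (fun j => A i j + v j)
      refine ⟨j, ?_⟩
      rw [← hj]
      exact h i
    choose f hf using hsel
    have hn0 : 0 < n := by omega
    let p : ℕ → Fin n := fun t => f^[t] ⟨0, hn0⟩
    have hp : ∀ r, A (p r) (p (r+1)) + v (p (r+1)) = (l : WithBot ℝ) + v (p r) := by
      intro r
      have : p (r+1) = f (p r) := Function.iterate_succ_apply' f r _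
      rw [this]
      exact hf (p r)
    have main : ∀ s t : ℕ, s < t → t ≤ n → p s = p t →
        (l : WithBot ℝ) ≤ (Finset.Icc 1 n).sup
          fun i => WithBot.map (fun x : ℝ => x / (i : ℝ)) (mpTrace (mpPow A i)) := by
      intro s t hst htn hpe
      set m := t - s with hm
      have hm1 : 1 ≤ m := by omega
      have hmn : m ≤ n := by omega
      set q : ℕ → Fin n := fun r => p (s + r) with hq
      have hq0 : q m = q 0 := by
        simp only [hq]
        rw [show s + m = t by omega, show s + 0 = s from rfl]
        exact hpe.symm
      have htel : (∑ r ∈ Finset.range m, A (q r) (q (r+1))) + v (q m)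
          = ((m * l : ℝ) : WithBot ℝ) + v (q 0) := by
        refine telescope A l v q (fun r => ?_) m
        simp only [hq, show ∀ r:ℕ, s + (r+1) = (s+r)+1 from fun r => by omega]
        exact hp (s + r)
      rw [hq0] at htel
      have hsum : (∑ r ∈ Finset.range m, A (q r) (q (r+1))) = ((m * l : ℝ) : WithBot ℝ) :=
        WithBot.add_right_cancel (hsupp (q 0)) htel
      have hpow : ((m * l : ℝ) : WithBot ℝ) ≤ mpPow A m (q 0) (q 0) := by
        rw [← hsum]
        have := path_le_pow A m q
        rwa [hq0] at this
      have htr : ((m * l : ℝ) : WithBot ℝ) ≤ mpTrace (mpPow A m) :=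
        le_trans hpow (Finset.le_sup (f := fun i => mpPow A m i i) (Finset.mem_univ (q 0)))
      have hterm : (l : WithBot ℝ) ≤ WithBot.map (fun x : ℝ => x / (m : ℝ)) (mpTrace (mpPow A m)) := by
        cases h3 : mpTrace (mpPow A m) with
        | bot => rw [h3] at htr; exact absurd (le_bot_iff.1 htr) WithBot.coe_ne_bot
        | coe c =>
          rw [h3] at htr
          rw [WithBot.map_coe, WithBot.coe_le_coe]
          have hc : (m : ℝ) * l ≤ c := by exact_mod_cast htr
          have hmpos : (0 : ℝ) < m := by exact_mod_cast hm1
          rw [le_div_iff₀ hmpos]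
          linarith [hc]
      exact le_trans hterm (Finset.le_sup (f := fun i : ℕ => WithBot.map (fun x : ℝ => x / (i:ℝ)) (mpTrace (mpPow A i))) (Finset.mem_Icc.2 ⟨hm1, hmn⟩))
    have hcard : Fintype.card (Fin n) < Fintype.card (Fin (n+1)) := by simp
    obtain ⟨x, y, hxy, hpe⟩ :=
      Fintype.exists_ne_map_eq_of_card_lt (fun t : Fin (n+1) => p t) hcard
    rcases hxy.lt_or_gt with hlt | hlt
    · exact main x y (by exact_mod_cast hlt) (by omega) hpe
    · exact main y x (by exact_mod_cast hlt) (by omega) hpe.symm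
  · -- upper bound: every trace term is ≤ l
    apply Finset.sup_le
    intro m hm
    obtain ⟨hm1, hmn⟩ := Finset.mem_Icc.1 hm
    have hdiag : ∀ j, mpPow A m j j ≤ ((m * l : ℝ) : WithBot ℝ) := by
      intro j
      have h1 : mpMulVec (mpPow A m) v j = ((m * l : ℝ) : WithBot ℝ) + v j :=
        mpPow_eigen A l v h m j
      have h2 : mpPow A m j j + v j ≤ mpMulVec (mpPow A m) v j := by
        simpa [mpMulVec] using
          Finset.le_sup (f := fun k => mpPow A m j k + v k) (Finset.mem_univ j)
      rw [h1] at h2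
      exact (WithBot.add_le_add_iff_right (hsupp j)).1 h2
    have htr : mpTrace (mpPow A m) ≤ ((m * l : ℝ) : WithBot ℝ) :=
      Finset.sup_le fun j _ => hdiag j
    cases h3 : mpTrace (mpPow A m) with
    | bot => simp
    | coe c =>
      rw [h3] at htr
      rw [WithBot.map_coe, WithBot.coe_le_coe]
      have hc : c ≤ (m : ℝ) * l := by exact_mod_cast htr
      have hmpos : (0 : ℝ) < m := by exact_mod_cast hm1
      rw [div_le_iff₀ hmpos]
      linarith [hc]

/-- **Perron–Frobenius in max-plus (Theorem 2 of the paper).**  For an `n × n` irreducible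
max-plus matrix (`n ≥ 2`), any two eigenvalues `λ, μ` (each admitting an eigenvector
`≠ (ε,…,ε)`) are equal, and this unique eigenvalue is
`λ₀ = ⊕_{i=1}^{n} tr(A^{⊗i})^{1/i}`, i.e. the maximum over `1 ≤ i ≤ n` of
`(1/i) · max_j (A^{⊗i}) j j`, terms equal to `ε` being discarded. -/
theorem stmt_9 {n : ℕ} (hn : 2 ≤ n) (A : Matrix (Fin n) (Fin n) (WithBot ℝ))
    (hirr : MPIrred A) (lam mu : WithBot ℝ)
    (hlam : ∃ v : Fin n → WithBot ℝ, (¬ ∀ i, v i = ⊥) ∧ ∀ i, mpMulVec A v i = lam + v i)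
    (hmu : ∃ w : Fin n → WithBot ℝ, (¬ ∀ i, w i = ⊥) ∧ ∀ i, mpMulVec A w i = mu + w i) :
    lam = mu ∧
    lam = (Finset.Icc 1 n).sup
        fun i => WithBot.map (fun x : ℝ => x / (i : ℝ)) (mpTrace (mpPow A i)) := by
  have h1 := eigen_eq_sup hn A hirr lam hlam
  have h2 := eigen_eq_sup hn A hirr mu hmu
  exact ⟨h1.trans h2.symm, h1⟩
end

section
/- Let D be an N×N matrix over the max-plus algebra ℝ_max that is block upper-triangular with respect to a partition of {1,…,N} into q consecutive blocks of sizes n₁,…,n_q (all blocks D_{ij} with j < i equal to ℰ). Suppose each diagonal block D_{ii} is irreducible with max-plus eigenvalue λ_i ∈ ℝ, and D_{i,i+1} ≠ ℰ for each i < q. Define ξ_q = λ_q and, for i < q, ξ_i = max( λ_i, max{ ξ_j : j > i and D_{ij} ≠ ℰ } ). Then there exist vectors v_1 ∈ ℝ^{n₁}, …, v_q ∈ ℝ^{n_q} with all entries finite such that the trajectories t_i(k) := v_i + k·ξ_i (for k ≥ 0) satisfy, for every i and every k ≥ 0, t_i(k+1) = D_{ii} ⊗ t_i(k) ⊕ ⊕_{j=i+1}^{q}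 D_{ij} ⊗ t_j(k), where ⊗ and ⊕ are the max-plus matrix–vector product and entrywise maximum. -/
/-- The set of indices belonging to block `l`, for a block-index function `β`. -/
def blockSet {N q : ℕ} (β : Fin N → Fin q) (l : Fin q) : Finset (Fin N) :=
  Finset.univ.filter fun i => β i = l

/-- The diagonal block of `D` corresponding to block `l`, obtained by restricting `D` to the
indices of block `l` (listed in increasing order). -/
def diagBlock {N q : ℕ} (D : Matrix (Fin N) (Fin N) (WithBot ℝ)) (β : Fin N → Fin q)
    (l : Fin q) :
    Matrix (Fin (blockSet β l).card) (Fin (blockSet β l).card) (WithBot ℝ) :=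
  D.submatrix (fun a => (((blockSet β l).orderIsoOfFin rfl) a : Fin N))
    (fun b => (((blockSet β l).orderIsoOfFin rfl) b : Fin N))

/-!
Since `D` is block upper-triangular and `ξ_l` dominates `ξ_j` for every block `j` that block `l`
feeds into, the rates `ρ a = ξ (β a)` never increase along the edges of `D`. It therefore suffices
to find a finite `v` such that in every row the maximum of `D a b + v b` equals `v a + ρ a` and is
attained at an index of the same rate; then `v + k ρ` solves the recurrence for every `k`.

Such a `v` is built block by block, from the last block to the first. On block `l`, with
`t = ξ_l`, one needs a finite solution of `x + t = D_ll ⊗ x ⊕ r`, where `r` is the input from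
later blocks of rate `t`. If `λ_l = t`, a finite eigenvector of `D_ll` (finite by irreducibility)
shifted up far enough works. If `λ_l < t`, some later block of rate `t` feeds into block `l`, so
`r ≠ ε`, and since `D_ll - t` has a negative eigenvalue the iterates of `r` decay geometrically:
their maximum over finitely many steps is a solution, finite by irreducibility. Later blocks of
smaller rate are lowered by a constant, which keeps them solved and out of block `l`'s maxima.
-/

open Finset

lemma withBot_finset_sup_add {ι : Type*} (s : Finset ι) (f : ι → WithBot ℝ) (c : WithBot ℝ) :
    s.sup f + c = s.sup fun i => f i + c :=
  apply_sup_eq_sup_comp_of_linearOrder (· + c) (fun _ _ h => add_le_add_left h c)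
    (WithBot.bot_add c)

lemma withBot_exists_le_coe_add {ι : Type*} [Finite ι] (f : ι → WithBot ℝ) (g : ι → ℝ) :
    ∃ c : ℝ, 0 ≤ c ∧ ∀ i, f i ≤ ((g i + c : ℝ) : WithBot ℝ) := by
  have h : ∀ i, ∃ c : ℝ, f i ≤ ((g i + c : ℝ) : WithBot ℝ) := fun i => by
    induction f i with
    | bot => exact ⟨0, bot_le⟩
    | coe y => exact ⟨y - g i, by norm_num⟩
  choose c hc using h
  obtain ⟨C, hC⟩ := Finite.exists_le c
  refine ⟨max C 0, le_max_right _ _, fun i => (hc i).trans ?_⟩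
  exact_mod_cast add_le_add_right ((hC i).trans (le_max_left C 0)) (g i)

lemma withBot_add_coe_sub (d : WithBot ℝ) (x c : ℝ) :
    d + ((x - c : ℝ) : WithBot ℝ) = d + (x : WithBot ℝ) + ((-c : ℝ) : WithBot ℝ) := by
  rw [add_assoc, ← WithBot.coe_add, sub_eq_add_neg]

lemma exists_mem_eq_of_sup_eq {ι α : Type*} [LinearOrder α] [OrderBot α] {s : Finset ι}
    {f : ι → α} {c : α} (h : s.sup f = c) (hc : c ≠ ⊥) : ∃ i ∈ s, f i = c := by
  rcases s.eq_empty_or_nonempty with rfl | hs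
  · exact absurd h.symm (by simpa using hc)
  obtain ⟨i, hi, hfi⟩ := exists_mem_eq_sup s hs f
  exact ⟨i, hi, hfi ▸ h⟩

section MaxPlusMatrix

variable {n : ℕ} (A : Matrix (Fin n) (Fin n) (WithBot ℝ))

lemma le_mpMulVec (v : Fin n → WithBot ℝ) (a b : Fin n) : A a b + v b ≤ mpMulVec A v a :=
  le_sup (f := fun b => A a b + v b) (mem_univ b)

lemma mpMulVec_le_iff {v : Fin n → WithBot ℝ} {a : Fin n} {c : WithBot ℝ} :
    mpMulVec A v a ≤ c ↔ ∀ b, A a b + v b ≤ c := by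
  simp [mpMulVec]

lemma mpMulVec_mono {v u : Fin n → WithBot ℝ} (h : v ≤ u) : mpMulVec A v ≤ mpMulVec A u :=
  fun a => (mpMulVec_le_iff A).2 fun b => (add_le_add_right (h b) _).trans (le_mpMulVec A u a b)

lemma mpMulVec_add_const (v : Fin n → WithBot ℝ) (c : WithBot ℝ) (a : Fin n) :
    mpMulVec A (fun b => v b + c) a = mpMulVec A v a + c := by
  simp only [mpMulVec, withBot_finset_sup_add, add_assoc]

lemma mpMulVec_ne_bot {v : Fin n → WithBot ℝ} {a b : Fin n} (hA : A a b ≠ ⊥) (hv : v b ≠ ⊥) :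
    mpMulVec A v a ≠ ⊥ :=
  ne_bot_of_le_ne_bot (WithBot.add_ne_bot.2 ⟨hA, hv⟩) (le_mpMulVec A v a b)

variable {A}

lemma MPIrred.exists_ne_bot (hA : MPIrred A) {S : Finset (Fin n)} (hS : S.Nonempty)
    (hSc : Sᶜ.Nonempty) : ∃ a ∈ S, ∃ b ∉ S, A a b ≠ ⊥ := by
  by_contra! h
  have hcard : #Sᶜ + #S = n := by rw [add_comm, card_add_card_compl, Fintype.card_fin]
  -- `σ` lists `Sᶜ` first and then `S`.
  let σ : Equiv.Perm (Fin n) := (finCongr hcard.symm).trans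
    (finSumFinEquiv.symm.trans (finSumEquivOfFinset rfl (by rw [compl_compl])))
  refine hA ⟨σ, #Sᶜ, card_pos.2 hSc, by have := card_pos.2 hS; omega, fun i j hi hj => ?_⟩
  obtain ⟨i, rfl⟩ := (finCongr hcard).surjective i
  obtain ⟨j, rfl⟩ := (finCongr hcard).surjective j
  induction i using Fin.addCases with
  | left i => simp at hi; omega
  | right i =>
    induction j using Fin.addCases with
    | left j =>
      apply h
      · simp [σ]
      · simpa [σ] using mem_compl.1 (Sᶜ.orderEmbOfFin_mem rfl j)
    | right j => simp at hj

lemma MPIrred.exists_finite_eigenvector (hA : MPIrred A) {w : Fin n → WithBot ℝ}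
    (hw : ∃ a, w a ≠ ⊥) {lam : ℝ} (he : ∀ a, mpMulVec A w a = lam + w a) :
    ∃ u : Fin n → ℝ, ∀ a,
      mpMulVec A (fun b => (u b : WithBot ℝ)) a = ((lam + u a : ℝ) : WithBot ℝ) := by
  have hfin : ∀ a, w a ≠ ⊥ := by
    by_contra! h
    obtain ⟨a₀, ha₀⟩ := h
    obtain ⟨a₁, ha₁⟩ := hw
    obtain ⟨a, ha, b, hb, hab⟩ := hA.exists_ne_bot (S := univ.filter fun a => w a = ⊥)
      ⟨a₀, by simpa using ha₀⟩ ⟨a₁, by simpa using ha₁⟩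
    simp only [mem_filter, mem_univ, true_and] at ha hb
    exact mpMulVec_ne_bot A hab hb (by rw [he, ha, WithBot.add_bot])
  refine ⟨fun a => (w a).unbot (hfin a), fun a => ?_⟩
  simp only [WithBot.coe_unbot, he, WithBot.coe_add]

lemma iterate_mpMulVec_le {w : Fin n → ℝ} {μ c : ℝ}
    (hw : ∀ a b, A a b + (w b : WithBot ℝ) ≤ ((μ + w a : ℝ) : WithBot ℝ))
    {r : Fin n → WithBot ℝ} (hr : ∀ a, r a ≤ ((w a + c : ℝ) : WithBot ℝ)) (m : ℕ) (a : Fin n) :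
    (mpMulVec A)^[m] r a ≤ ((m * μ + w a + c : ℝ) : WithBot ℝ) := by
  induction m generalizing a with
  | zero => simpa using hr a
  | succ m ih =>
    rw [Function.iterate_succ_apply', mpMulVec_le_iff]
    intro b
    calc A a b + (mpMulVec A)^[m] r b
        ≤ A a b + ((w b + (m * μ + c) : ℝ) : WithBot ℝ) := by
          gcongr; exact (ih b).trans_eq (by ring_nf)
      _ ≤ ((μ + w a : ℝ) : WithBot ℝ) + ((m * μ + c : ℝ) : WithBot ℝ) := by
          rw [WithBot.coe_add, ← add_assoc]; gcongr; exact hw a b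
      _ = (((m + 1 : ℕ) * μ + w a + c : ℝ) : WithBot ℝ) := by
          rw [← WithBot.coe_add]; congr 1; push_cast; ring

lemma MPIrred.exists_iterate_ne_bot (hA : MPIrred A) {r : Fin n → WithBot ℝ} (hr : ∃ b, r b ≠ ⊥)
    (a : Fin n) : ∃ m, (mpMulVec A)^[m] r a ≠ ⊥ := by
  classical
  by_contra! h
  obtain ⟨b₀, hb₀⟩ := hr
  obtain ⟨a, ha, b, hb, hab⟩ := hA.exists_ne_bot
    (S := univ.filter fun a => ∀ m, (mpMulVec A)^[m] r a = ⊥) ⟨a, by simpa using h⟩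
    ⟨b₀, by simpa using ⟨0, hb₀⟩⟩
  simp only [mem_filter, mem_univ, true_and, not_forall] at ha hb
  obtain ⟨m, hm⟩ := hb
  exact mpMulVec_ne_bot A hab hm (by rw [← Function.iterate_succ_apply' (mpMulVec A), ha])

lemma iterate_sup_eq_mpMulVec_sup {r : Fin n → WithBot ℝ} {M : ℕ}
    (h : ∀ m a, (mpMulVec A)^[m] r a ≤ (range (M + 1)).sup fun k => (mpMulVec A)^[k] r a)
    (a : Fin n) :
    ((range (M + 1)).sup fun k => (mpMulVec A)^[k] r a) =
      mpMulVec A (fun b => (range (M + 1)).sup fun k => (mpMulVec A)^[k] r b) a ⊔ r a := by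
  apply le_antisymm
  · refine Finset.sup_le fun k _ => ?_
    cases k with
    | zero => exact le_sup_right
    | succ k =>
      rw [Function.iterate_succ_apply']
      exact le_sup_of_le_left (mpMulVec_mono A (fun b => h k b) a)
  · refine sup_le ((mpMulVec_le_iff A).2 fun b => ?_) (h 0 a)
    rw [add_comm, withBot_finset_sup_add]
    refine Finset.sup_le fun k _ => ?_
    rw [add_comm]
    refine (le_mpMulVec A _ a b).trans ?_
    rw [← Function.iterate_succ_apply' (mpMulVec A) k r]
    exact h (k + 1) a

lemma MPIrred.exists_fixedPoint (hA : MPIrred A) {w : Fin n → ℝ} {μ : ℝ}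
    (hw : ∀ a b, A a b + (w b : WithBot ℝ) ≤ ((μ + w a : ℝ) : WithBot ℝ)) (hμ : μ < 0)
    {r : Fin n → WithBot ℝ} (hr : ∃ b, r b ≠ ⊥) :
    ∃ x : Fin n → ℝ, ∀ a, (x a : WithBot ℝ) = mpMulVec A (fun b => (x b : WithBot ℝ)) a ⊔ r a := by
  obtain ⟨c, -, hc⟩ := withBot_exists_le_coe_add r w
  choose m hm using hA.exists_iterate_ne_bot hr
  choose L hL using fun a => WithBot.ne_bot_iff_exists.1 (hm a)
  -- The iterates decay geometrically, so after time `K a` they stay below the value at time `m a`.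
  have hK : ∀ a, ∃ K : ℕ, m a ≤ K ∧ ∀ k : ℕ, K ≤ k → k * μ + w a + c ≤ L a := by
    intro a
    obtain ⟨K, hK⟩ := exists_nat_ge ((L a - w a - c) / μ)
    refine ⟨max K (m a), le_max_right _ _, fun k hk => ?_⟩
    have : (L a - w a - c) / μ ≤ k := hK.trans (by exact_mod_cast (le_max_left _ _).trans hk)
    rw [div_le_iff_of_neg hμ] at this
    linarith
  choose K hmK hK using hK
  obtain ⟨M, hM⟩ := Finite.exists_le K
  have hy : ∀ k a, (mpMulVec A)^[k] r a ≤ (range (M + 1)).sup fun k => (mpMulVec A)^[k] r a := by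
    intro k a
    by_cases hk : k ≤ M
    · exact le_sup (f := fun k => (mpMulVec A)^[k] r a) (mem_range.2 (by omega))
    · calc (mpMulVec A)^[k] r a ≤ ((k * μ + w a + c : ℝ) : WithBot ℝ) :=
            iterate_mpMulVec_le hw hc k a
        _ ≤ L a := by exact_mod_cast hK a k (by have := hM a; omega)
        _ = (mpMulVec A)^[m a] r a := hL a
        _ ≤ _ := le_sup (f := fun k => (mpMulVec A)^[k] r a)
            (mem_range.2 (by have := hmK a; have := hM a; omega))
  have hfin : ∀ a, ((range (M + 1)).sup fun k => (mpMulVec A)^[k] r a) ≠ ⊥ :=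
    fun a => ne_bot_of_le_ne_bot (hm a) (hy _ a)
  refine ⟨fun a => WithBot.unbot _ (hfin a), fun a => ?_⟩
  simp only [WithBot.coe_unbot]
  exact iterate_sup_eq_mpMulVec_sup hy a

lemma exists_fixedPoint_of_eigenvector {w : Fin n → ℝ} {lam : ℝ}
    (hw : ∀ a, mpMulVec A (fun b => (w b : WithBot ℝ)) a = ((lam + w a : ℝ) : WithBot ℝ))
    (r : Fin n → WithBot ℝ) :
    ∃ x : Fin n → ℝ, ∀ a,
      ((x a + lam : ℝ) : WithBot ℝ) = mpMulVec A (fun b => (x b : WithBot ℝ)) a ⊔ r a := by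
  obtain ⟨c, -, hc⟩ := withBot_exists_le_coe_add r fun a => lam + w a
  refine ⟨fun a => w a + c, fun a => ?_⟩
  simp only [WithBot.coe_add (w _), mpMulVec_add_const, hw]
  rw [sup_eq_left.2 ((hc a).trans_eq (by push_cast; ring_nf)), ← WithBot.coe_add]
  congr 1
  ring

lemma MPIrred.exists_fixedPoint_of_lt (hA : MPIrred A) {w : Fin n → ℝ} {μ lam : ℝ}
    (hw : ∀ a, mpMulVec A (fun b => (w b : WithBot ℝ)) a = ((μ + w a : ℝ) : WithBot ℝ))
    (hμ : μ < lam) {r : Fin n → WithBot ℝ} (hr : ∃ b, r b ≠ ⊥) :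
    ∃ x : Fin n → ℝ, ∀ a,
      ((x a + lam : ℝ) : WithBot ℝ) = mpMulVec A (fun b => (x b : WithBot ℝ)) a ⊔ r a := by
  set A' : Matrix (Fin n) (Fin n) (WithBot ℝ) :=
    Matrix.of fun a b => A a b + ((-lam : ℝ) : WithBot ℝ)
  have hA'v : ∀ v a, mpMulVec A' v a = mpMulVec A v a + ((-lam : ℝ) : WithBot ℝ) := by
    intro v a
    simp only [mpMulVec, A', Matrix.of_apply, withBot_finset_sup_add, add_right_comm]
  have hA' : MPIrred A' := fun ⟨σ, k, hk, hkn, hσ⟩ => hA ⟨σ, k, hk, hkn, fun i j hi hj =>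
    (WithBot.add_eq_bot.1 (hσ i j hi hj)).resolve_right WithBot.coe_ne_bot⟩
  have hw' : ∀ a b, A' a b + (w b : WithBot ℝ) ≤ ((μ - lam + w a : ℝ) : WithBot ℝ) := by
    intro a b
    calc A' a b + (w b : WithBot ℝ) ≤ mpMulVec A' (fun b => (w b : WithBot ℝ)) a :=
          le_mpMulVec A' (fun b => (w b : WithBot ℝ)) a b
      _ = ((μ - lam + w a : ℝ) : WithBot ℝ) := by
          rw [hA'v, hw, ← WithBot.coe_add]; congr 1; ring
  obtain ⟨x, hx⟩ := hA'.exists_fixedPoint hw' (by linarith)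
    (r := fun a => r a + ((-lam : ℝ) : WithBot ℝ))
    (by obtain ⟨b, hb⟩ := hr; exact ⟨b, WithBot.add_ne_bot.2 ⟨hb, WithBot.coe_ne_bot⟩⟩)
  refine ⟨x, fun a => ?_⟩
  rw [WithBot.coe_add, hx, hA'v, max_add_add_right, add_assoc, ← WithBot.coe_add,
    neg_add_cancel, WithBot.coe_zero, add_zero]

end MaxPlusMatrix

section GrowthRow

variable {N : ℕ} (D : Matrix (Fin N) (Fin N) (WithBot ℝ)) (ρ : Fin N → ℝ)

/-- Row `a` of `t(k+1) = D ⊗ t(k)` holds for `t(k) = v + k ρ` and every `k`, provided the rates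
`ρ` do not increase along the edges of `D` (`IsGrowthRow.mpMulVec_eq`). -/
def IsGrowthRow (v : Fin N → ℝ) (a : Fin N) : Prop :=
  (∀ b, D a b + (v b : WithBot ℝ) ≤ ((v a + ρ a : ℝ) : WithBot ℝ)) ∧
    ∃ b, ρ b = ρ a ∧ D a b + (v b : WithBot ℝ) = ((v a + ρ a : ℝ) : WithBot ℝ)

variable {D ρ} {v : Fin N → ℝ} {a : Fin N}

lemma IsGrowthRow.mpMulVec_eq (h : IsGrowthRow D ρ v a) (hρ : ∀ b, D a b ≠ ⊥ → ρ b ≤ ρ a)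
    (k : ℕ) :
    ((v a + (k + 1) * ρ a : ℝ) : WithBot ℝ) =
      mpMulVec D (fun b => ((v b + k * ρ b : ℝ) : WithBot ℝ)) a := by
  obtain ⟨hle, b, hb, hab⟩ := h
  apply le_antisymm
  · refine le_trans (le_of_eq ?_) (le_mpMulVec D _ a b)
    rw [hb, WithBot.coe_add (v b), ← add_assoc, hab, ← WithBot.coe_add]
    congr 1
    ring
  · refine (mpMulVec_le_iff D).2 fun b => ?_
    by_cases hD : D a b = ⊥
    · simp [hD]
    calc D a b + ((v b + k * ρ b : ℝ) : WithBot ℝ)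
        = D a b + (v b : WithBot ℝ) + ((k * ρ b : ℝ) : WithBot ℝ) := by
          rw [WithBot.coe_add, add_assoc]
      _ ≤ ((v a + ρ a : ℝ) : WithBot ℝ) + ((k * ρ a : ℝ) : WithBot ℝ) := by
          gcongr
          · exact hle b
          · exact_mod_cast mul_le_mul_of_nonneg_left (hρ b hD) k.cast_nonneg
      _ = ((v a + (k + 1) * ρ a : ℝ) : WithBot ℝ) := by
          rw [← WithBot.coe_add]
          congr 1
          ring

lemma IsGrowthRow.congr (h : IsGrowthRow D ρ v a) {u : Fin N → ℝ} (ha : u a = v a)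
    (hb : ∀ b, D a b ≠ ⊥ → u b = v b) : IsGrowthRow D ρ u a := by
  have hterm : ∀ b, D a b + (u b : WithBot ℝ) = D a b + (v b : WithBot ℝ) := fun b => by
    by_cases hD : D a b = ⊥
    · simp [hD]
    · rw [hb b hD]
  obtain ⟨hle, b, hb, hab⟩ := h
  exact ⟨fun b => by rw [hterm, ha]; exact hle b, b, hb, by rw [hterm, ha, hab]⟩

lemma IsGrowthRow.sub_const (h : IsGrowthRow D ρ v a) (c : ℝ) :
    IsGrowthRow D ρ (fun b => v b - c) a := by
  have hrhs : ((v a - c + ρ a : ℝ) : WithBot ℝ) =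
      ((v a + ρ a : ℝ) : WithBot ℝ) + ((-c : ℝ) : WithBot ℝ) := by
    rw [← WithBot.coe_add]; congr 1; ring
  obtain ⟨hle, b, hb, hab⟩ := h
  exact ⟨fun b => by rw [withBot_add_coe_sub, hrhs]; gcongr; exact hle b, b, hb,
    by rw [withBot_add_coe_sub, hrhs, hab]⟩

lemma IsGrowthRow.shift (h : IsGrowthRow D ρ v a) (hρ : ∀ b, D a b ≠ ⊥ → ρ b ≤ ρ a) (t : ℝ)
    {M : ℝ} (hM : 0 ≤ M) : IsGrowthRow D ρ (fun b => if ρ b < t then v b - M else v b) a := by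
  by_cases ha : ρ a < t
  · exact (h.sub_const M).congr (if_pos ha) fun b hD => if_pos ((hρ b hD).trans_lt ha)
  obtain ⟨hle, b, hb, hab⟩ := h
  refine ⟨fun b => ?_, b, hb, by simp only [if_neg ha, if_neg (hb ▸ ha), hab]⟩
  simp only [if_neg ha]
  split_ifs
  · exact le_trans (by gcongr; exact_mod_cast (by linarith : v b - M ≤ v b)) (hle b)
  · exact hle b

end GrowthRow

section Blocks

variable {N q : ℕ} {D : Matrix (Fin N) (Fin N) (WithBot ℝ)} {β : Fin N → Fin q}

lemma mpMulVec_diagBlock (l : Fin q) (u : Fin N → WithBot ℝ) (a : Fin (blockSet β l).card) :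
    mpMulVec (diagBlock D β l) (fun b => u ((blockSet β l).orderEmbOfFin rfl b)) a =
      (blockSet β l).sup fun b => D ((blockSet β l).orderEmbOfFin rfl a) b + u b := by
  have h := sup_map univ ((blockSet β l).orderEmbOfFin rfl).toEmbedding
    fun b => D ((blockSet β l).orderEmbOfFin rfl a) b + u b
  rw [map_orderEmbOfFin_univ] at h
  exact h.symm

lemma exists_block_fixedPoint {l : Fin q} (hirr : MPIrred (diagBlock D β l))
    {w : Fin (blockSet β l).card → WithBot ℝ} (hw : ∃ a, w a ≠ ⊥) {lam t : ℝ}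
    (he : ∀ a, mpMulVec (diagBlock D β l) w a = lam + w a) (hlam : lam ≤ t)
    (R : Fin N → WithBot ℝ) (hR : lam < t → ∃ a, β a = l ∧ R a ≠ ⊥) :
    ∃ x : Fin N → ℝ, ∀ a, β a = l →
      ((x a + t : ℝ) : WithBot ℝ) =
        (blockSet β l).sup (fun b => D a b + (x b : WithBot ℝ)) ⊔ R a := by
  set emb := (blockSet β l).orderEmbOfFin rfl with hemb_def
  have hemb : ∀ a, β a = l → ∃ a', emb a' = a := fun a ha => by
    rw [← Set.mem_range, range_orderEmbOfFin]
    simpa [blockSet] using ha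
  obtain ⟨u, hu⟩ := hirr.exists_finite_eigenvector hw he
  obtain ⟨y, hy⟩ : ∃ y : Fin (blockSet β l).card → ℝ, ∀ a',
      ((y a' + t : ℝ) : WithBot ℝ) = mpMulVec (diagBlock D β l) (fun b => (y b : WithBot ℝ)) a' ⊔
        R (emb a') := by
    rcases hlam.lt_or_eq with hlt | rfl
    · obtain ⟨a, ha, hRa⟩ := hR hlt
      obtain ⟨a', rfl⟩ := hemb a ha
      exact hirr.exists_fixedPoint_of_lt hu hlt ⟨a', hRa⟩
    · exact exists_fixedPoint_of_eigenvector hu _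
  have hext : ∀ b, Function.extend emb y 0 (emb b) = y b := emb.injective.extend_apply y 0
  refine ⟨Function.extend emb y 0, fun a ha => ?_⟩
  obtain ⟨a', rfl⟩ := hemb a ha
  rw [hext, hy, ← mpMulVec_diagBlock, ← hemb_def]
  simp only [hext]

variable {lam xi : Fin q → ℝ}

open Classical in
def IsCycleTimeVector (D : Matrix (Fin N) (Fin N) (WithBot ℝ)) (β : Fin N → Fin q)
    (lam xi : Fin q → ℝ) : Prop :=
  ∀ l : Fin q, ((xi l : ℝ) : WithBot ℝ) =
    max ((lam l : ℝ) : WithBot ℝ)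
      ((Finset.univ.filter fun j : Fin q =>
          l < j ∧ ∃ a b : Fin N, β a = l ∧ β b = j ∧ D a b ≠ ⊥).sup
        fun j => ((xi j : ℝ) : WithBot ℝ))

open Classical in
noncomputable def sameRateInflow (D : Matrix (Fin N) (Fin N) (WithBot ℝ)) (β : Fin N → Fin q)
    (xi : Fin q → ℝ) (v : Fin N → ℝ) (l : Fin q) (a : Fin N) : WithBot ℝ :=
  (univ.filter fun b => l < β b ∧ xi (β b) = xi l).sup fun b => D a b + (v b : WithBot ℝ)

lemma IsCycleTimeVector.le_of_ne_bot (hxi : IsCycleTimeVector D β lam xi)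
    (htri : ∀ a b, β b < β a → D a b = ⊥) {a b : Fin N} (hD : D a b ≠ ⊥) :
    β a ≤ β b ∧ xi (β b) ≤ xi (β a) := by
  classical
  have hβ : β a ≤ β b := not_lt.1 fun h => hD (htri a b h)
  refine ⟨hβ, ?_⟩
  rcases hβ.lt_or_eq with hlt | heq
  · have : ((xi (β b) : ℝ) : WithBot ℝ) ≤ xi (β a) := by
      rw [hxi (β a)]
      exact le_max_of_le_right (le_sup (f := fun j => ((xi j : ℝ) : WithBot ℝ))
        (mem_filter.2 ⟨mem_univ _, hlt, a, b, rfl, rfl, hD⟩))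
    exact_mod_cast this
  · rw [heq]

lemma IsCycleTimeVector.lam_le (hxi : IsCycleTimeVector D β lam xi) (l : Fin q) :
    lam l ≤ xi l := by
  have : ((lam l : ℝ) : WithBot ℝ) ≤ xi l := by rw [hxi l]; exact le_max_left _ _
  exact_mod_cast this

lemma IsCycleTimeVector.exists_sameRateInflow_ne_bot
    (hxi : IsCycleTimeVector D β lam xi) {l : Fin q} (hlt : lam l < xi l) (v : Fin N → ℝ) :
    ∃ a, β a = l ∧ sameRateInflow D β xi v l a ≠ ⊥ := by
  classical
  have hsup := hxi l
  rcases max_choice ((lam l : ℝ) : WithBot ℝ) ((Finset.univ.filter fun j : Fin q =>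
      l < j ∧ ∃ a b : Fin N, β a = l ∧ β b = j ∧ D a b ≠ ⊥).sup
      fun j => ((xi j : ℝ) : WithBot ℝ)) with h | h
  · rw [h] at hsup
    exact absurd (WithBot.coe_injective hsup) hlt.ne'
  rw [h] at hsup
  obtain ⟨j, hj, hxj⟩ := exists_mem_eq_of_sup_eq hsup.symm WithBot.coe_ne_bot
  simp only [mem_filter, mem_univ, true_and] at hj
  obtain ⟨hlj, a, b, rfl, rfl, hD⟩ := hj
  refine ⟨a, rfl, ne_bot_of_le_ne_bot (WithBot.add_ne_bot.2 ⟨hD, WithBot.coe_ne_bot⟩)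
    (le_sup (f := fun b => D a b + (v b : WithBot ℝ)) ?_)⟩
  simpa using ⟨hlj, WithBot.coe_injective hxj⟩

lemma isGrowthRow_of_block_row
    (hedge : ∀ a b, D a b ≠ ⊥ → β a ≤ β b ∧ xi (β b) ≤ xi (β a)) {v : Fin N → ℝ} {a : Fin N}
    (hx : ((v a + xi (β a) : ℝ) : WithBot ℝ) =
      (blockSet β (β a)).sup (fun b => D a b + (v b : WithBot ℝ)) ⊔
        sameRateInflow D β xi v (β a) a)
    (hslow : ∀ b, β a < β b → xi (β b) < xi (β a) →
      D a b + (v b : WithBot ℝ) ≤ ((v a + xi (β a) : ℝ) : WithBot ℝ)) :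
    IsGrowthRow D (fun b => xi (β b)) v a := by
  classical
  refine ⟨fun b => ?_, ?_⟩
  · by_cases hD : D a b = ⊥
    · simp [hD]
    obtain ⟨hβ, hρ⟩ := hedge a b hD
    rcases hβ.lt_or_eq with hlt | hbl
    · rcases hρ.lt_or_eq with hs | hs
      · exact hslow b hlt hs
      rw [hx]
      exact le_sup_of_le_right (le_sup (f := fun b => D a b + (v b : WithBot ℝ))
        (by simpa using ⟨hlt, hs⟩))
    · rw [hx]
      exact le_sup_of_le_left (le_sup (f := fun b => D a b + (v b : WithBot ℝ))
        (by simpa [blockSet] using hbl.symm))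
  · rcases max_choice ((blockSet β (β a)).sup fun b => D a b + (v b : WithBot ℝ))
      (sameRateInflow D β xi v (β a) a) with h | h <;>
      obtain ⟨b, hb, hab⟩ := exists_mem_eq_of_sup_eq (hx.trans h).symm WithBot.coe_ne_bot
    · exact ⟨b, congrArg xi (by simpa [blockSet] using hb), hab⟩
    · exact ⟨b, (by simpa using hb : β a < β b ∧ xi (β b) = xi (β a)).2, hab⟩

lemma exists_isGrowthRow_of_block
    (hedge : ∀ a b, D a b ≠ ⊥ → β a ≤ β b ∧ xi (β b) ≤ xi (β a)) {l : Fin q} {v' : Fin N → ℝ}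
    (hv' : ∀ a, l < β a → IsGrowthRow D (fun b => xi (β b)) v' a) {x : Fin N → ℝ}
    (hx : ∀ a, β a = l → ((x a + xi l : ℝ) : WithBot ℝ) =
      (blockSet β l).sup (fun b => D a b + (x b : WithBot ℝ)) ⊔ sameRateInflow D β xi v' l a) :
    ∃ v : Fin N → ℝ, ∀ a, l ≤ β a → IsGrowthRow D (fun b => xi (β b)) v a := by
  classical
  -- Later blocks of smaller rate are pushed down by `M`, so that they never dominate block `l`.
  obtain ⟨M, hM0, hM⟩ := withBot_exists_le_coe_add (ι := Fin N × Fin N)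
    (fun p => D p.1 p.2 + (v' p.2 : WithBot ℝ)) (fun p => x p.1 + xi l)
  set u : Fin N → ℝ := fun b => if xi (β b) < xi l then v' b - M else v' b
  refine ⟨fun b => if β b = l then x b else u b, fun a ha => ?_⟩
  rcases ha.lt_or_eq with ha | ha
  · exact ((hv' a ha).shift (fun b hD => (hedge a b hD).2) (xi l) hM0).congr (if_neg ha.ne')
      fun b hD => if_neg (ha.trans_le (hedge a b hD).1).ne'
  subst ha
  refine isGrowthRow_of_block_row hedge ?_ fun b hlt hs => ?_
  · rw [if_pos rfl, hx a rfl, sameRateInflow, sameRateInflow]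
    congr 1
    · exact sup_congr rfl fun b hb => by simp [(by simpa [blockSet] using hb : β b = β a)]
    · refine sup_congr rfl fun b hb => ?_
      simp only [mem_filter, mem_univ, true_and] at hb
      simp [u, hb.1.ne', hb.2]
  · simp only [if_neg hlt.ne', u, if_pos hs]
    calc D a b + ((v' b - M : ℝ) : WithBot ℝ)
        = D a b + (v' b : WithBot ℝ) + ((-M : ℝ) : WithBot ℝ) := withBot_add_coe_sub _ _ _
      _ ≤ ((x a + xi (β a) + M : ℝ) : WithBot ℝ) + ((-M : ℝ) : WithBot ℝ) := by
          gcongr; exact hM (a, b)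
      _ = ((x a + xi (β a) : ℝ) : WithBot ℝ) := by rw [← WithBot.coe_add]; congr 1; ring

end Blocks

open Classical in
theorem stmt_15_general {N q : ℕ} (D : Matrix (Fin N) (Fin N) (WithBot ℝ))
    (β : Fin N → Fin q)
    (htri : ∀ i j : Fin N, β j < β i → D i j = ⊥)
    (lam : Fin q → ℝ)
    (hirr : ∀ l : Fin q, MPIrred (diagBlock D β l))
    (heig : ∀ l : Fin q, ∃ w : Fin (blockSet β l).card → WithBot ℝ,
      (¬ ∀ a, w a = ⊥) ∧
      ∀ a, mpMulVec (diagBlock D β l) w a = ((lam l : ℝ) : WithBot ℝ) + w a)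
    (xi : Fin q → ℝ)
    (hxi : ∀ l : Fin q, ((xi l : ℝ) : WithBot ℝ) =
      max ((lam l : ℝ) : WithBot ℝ)
        ((Finset.univ.filter fun j : Fin q =>
            l < j ∧ ∃ a b : Fin N, β a = l ∧ β b = j ∧ D a b ≠ ⊥).sup
          fun j => ((xi j : ℝ) : WithBot ℝ))) :
    ∃ v : Fin N → ℝ, ∀ (k : ℕ) (a : Fin N),
      ((v a + ((k : ℝ) + 1) * xi (β a) : ℝ) : WithBot ℝ) =
        mpMulVec D (fun b => ((v b + (k : ℝ) * xi (β b) : ℝ) : WithBot ℝ)) a := by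
  have hxi : IsCycleTimeVector D β lam xi := hxi
  have hedge : ∀ a b, D a b ≠ ⊥ → β a ≤ β b ∧ xi (β b) ≤ xi (β a) :=
    fun _ _ hD => hxi.le_of_ne_bot htri hD
  have hblocks : ∀ m ≤ q, ∃ v : Fin N → ℝ, ∀ a, m ≤ (β a : ℕ) →
      IsGrowthRow D (fun b => xi (β b)) v a := by
    intro m hm
    induction hm using Nat.decreasingInduction with
    | self => exact ⟨0, fun a ha => absurd (β a).isLt (not_lt.2 ha)⟩
    | of_succ l hl ih =>
      obtain ⟨v', hv'⟩ := ih
      obtain ⟨w, hw, he⟩ := heig ⟨l, hl⟩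
      obtain ⟨x, hx⟩ := exists_block_fixedPoint (hirr ⟨l, hl⟩) (not_forall.1 hw) he
        (hxi.lam_le _) _ fun hlt => hxi.exists_sameRateInflow_ne_bot hlt v'
      exact exists_isGrowthRow_of_block hedge (fun a ha => hv' a ha) hx
  obtain ⟨v, hv⟩ := hblocks 0 (Nat.zero_le q)
  exact ⟨v, fun k a => (hv a (Nat.zero_le _)).mpMulVec_eq (fun b hD => (hedge a b hD).2) k⟩

open Classical in
/-- **Theorem 3 of the paper: Solution to a Reducible Dynamic System.**  Let `D` be an
`N × N` max-plus matrix, block upper-triangular with respect to a partition of `{1,…,N}`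
into `q` consecutive blocks (given by the monotone surjective block-index map `β`; all
blocks strictly below the diagonal are `ε`).  Suppose each diagonal block is irreducible
with max-plus eigenvalue `λ l ∈ ℝ`, and each supradiagonal block `D_{l,l+1}` is not
identically `ε`.  Let `ξ` satisfy `ξ_q = λ_q` and
`ξ_i = max(λ_i, max{ξ_j : j > i, D_{ij} ≠ ℰ})` for `i < q` (expressed uniformly below via a
possibly-empty max-plus supremum).  Then there is a vector `v` with all entries finite such
that the trajectories `t i (k) = v i + k · ξ (β i)` solve the recurrence
`t_i(k+1) = D_{ii} ⊗ t_i(k) ⊕ ⊕_{j=i+1}^{q} D_{ij} ⊗ t_j(k)`, i.e. (using the block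
upper-triangularity) `t(k+1) = D ⊗ t(k)` rowwise. -/
theorem stmt_15 {N q : ℕ} (D : Matrix (Fin N) (Fin N) (WithBot ℝ))
    (β : Fin N → Fin q) (hmono : Monotone β) (hsurj : Function.Surjective β)
    (htri : ∀ i j : Fin N, β j < β i → D i j = ⊥)
    (lam : Fin q → ℝ)
    (hirr : ∀ l : Fin q, MPIrred (diagBlock D β l))
    (heig : ∀ l : Fin q, ∃ w : Fin (blockSet β l).card → WithBot ℝ,
      (¬ ∀ a, w a = ⊥) ∧
      ∀ a, mpMulVec (diagBlock D β l) w a = ((lam l : ℝ) : WithBot ℝ) + w a)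
    (hsupra : ∀ l : ℕ, l + 1 < q → ∃ i j : Fin N,
      (β i : ℕ) = l ∧ (β j : ℕ) = l + 1 ∧ D i j ≠ ⊥)
    (xi : Fin q → ℝ)
    (hxi : ∀ l : Fin q, ((xi l : ℝ) : WithBot ℝ) =
      max ((lam l : ℝ) : WithBot ℝ)
        ((Finset.univ.filter fun j : Fin q =>
            l < j ∧ ∃ a b : Fin N, β a = l ∧ β b = j ∧ D a b ≠ ⊥).sup
          fun j => ((xi j : ℝ) : WithBot ℝ))) :
    ∃ v : Fin N → ℝ, ∀ (k : ℕ) (a : Fin N),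
      ((v a + ((k : ℝ) + 1) * xi (β a) : ℝ) : WithBot ℝ) =
        mpMulVec D (fun b => ((v b + (k : ℝ) * xi (β b) : ℝ) : WithBot ℝ)) a :=
  stmt_15_general D β htri lam hirr heig xi hxi
end
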